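/- arXiv:2101.02887 — 12 statements merged into one kernel-verified Lean document; each statement's English description precedes it below -/
import Mathlib

section
/- For every family of n sets, each consisting of n mutually disjoint closed intervals in the real line, there exists a system of disjoint representatives of size n; that is, one can choose one interval from each of the n families so that the chosen n intervals are mutually disjoint. -/
open Classical in
/-- Greedy induction: if `s` is a set of `m` families and each family `i ∈ s`
has at least `m` available intervals `T i`, then one can choose mutually
disjoint representatives for families in `s`. -/
theorem sdr_aux (n : ℕ) (A : Fin n → Fin n → Set ℝ) (a b : Fin n → Fin n → ℝ)
    (hab : ∀ i j, A i j = Set.Icc (a i j) (b i j))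
    (hdisj : ∀ i, ∀ j k, j ≠ k → Disjoint (A i j) (A i k)) :
    ∀ m (s : Finset (Fin n)), s.card = m → ∀ T : Fin n → Finset (Fin n),
      (∀ i ∈ s, m ≤ (T i).card) →
      ∃ g : Fin n → Fin n, (∀ i ∈ s, g i ∈ T i) ∧
        ∀ i ∈ s, ∀ i' ∈ s, i ≠ i' → Disjoint (A i (g i)) (A i' (g i')) := by
  intro m
  induction m with
  | zero =>
    intro s hs T _
    have hse : s = ∅ := Finset.card_eq_zero.mp hs
    subst hse
    exact ⟨id, fun i hi => absurd hi (Finset.notMem_empty i),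
      fun i hi => absurd hi (Finset.notMem_empty i)⟩
  | succ m ih =>
    intro s hs T hT
    have hsne : s.Nonempty := by rw [← Finset.card_pos, hs]; omega
    have hne : (s.sigma fun i => T i).Nonempty := by
      obtain ⟨i, hi⟩ := hsne
      have hpos : 0 < (T i).card := lt_of_lt_of_le (Nat.succ_pos m) (hT i hi)
      obtain ⟨j, hj⟩ := Finset.card_pos.mp hpos
      exact ⟨⟨i, j⟩, Finset.mem_sigma.mpr ⟨hi, hj⟩⟩
    obtain ⟨⟨i0, j0⟩, hmem, hmin⟩ :=
      Finset.exists_min_image (s.sigma fun i => T i) (fun p => b p.1 p.2) hne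
    rw [Finset.mem_sigma] at hmem
    obtain ⟨hi0, hj0⟩ := hmem
    set s' := s.erase i0 with hs'def
    set T' := fun i => (T i).filter (fun j => Disjoint (A i j) (A i0 j0)) with hT'def
    have key : ∀ i ∈ s', ∀ k ∈ T i, ¬ Disjoint (A i k) (A i0 j0) → b i0 j0 ∈ A i k := by
      intro i hi k hk hnd
      obtain ⟨x, hx1, hx2⟩ := Set.not_disjoint_iff.mp hnd
      rw [hab] at hx1 hx2 ⊢
      have hbk : b i0 j0 ≤ b i k :=
        hmin ⟨i, k⟩ (Finset.mem_sigma.mpr ⟨Finset.mem_of_mem_erase hi, hk⟩)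
      exact ⟨hx1.1.trans hx2.2, hbk⟩
    have hrem : ∀ i ∈ s',
        ((T i).filter (fun j => ¬ Disjoint (A i j) (A i0 j0))).card ≤ 1 := by
      intro i hi
      apply Finset.card_le_one.mpr
      intro j hj j' hj'
      simp only [Finset.mem_filter] at hj hj'
      by_contra hne'
      have hd := hdisj i j j' hne'
      exact (Set.disjoint_left.mp hd (key i hi j hj.1 hj.2)) (key i hi j' hj'.1 hj'.2)
    have hT' : ∀ i ∈ s', m ≤ (T' i).card := by
      intro i hi
      have h1 := Finset.card_filter_add_card_filter_not
        (s := T i) (p := fun j => Disjoint (A i j) (A i0 j0))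
      have h2 := hT i (Finset.mem_of_mem_erase hi)
      have h3 := hrem i hi
      simp only [hT'def]
      omega
    have hs' : s'.card = m := by
      rw [hs'def, Finset.card_erase_of_mem hi0, hs]; omega
    obtain ⟨g', hg1, hg2⟩ := ih s' hs' T' hT'
    refine ⟨Function.update g' i0 j0, ?_, ?_⟩
    · intro i hi
      by_cases h : i = i0
      · subst h; rw [Function.update_self]; exact hj0
      · rw [Function.update_of_ne h]
        have := hg1 i (Finset.mem_erase.mpr ⟨h, hi⟩)
        exact (Finset.mem_filter.mp this).1
    · intro i hi i' hi' hne'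
      by_cases h : i = i0
      · subst h
        rw [Function.update_self, Function.update_of_ne (Ne.symm hne')]
        have := hg1 i' (Finset.mem_erase.mpr ⟨Ne.symm hne', hi'⟩)
        exact ((Finset.mem_filter.mp this).2).symm
      · by_cases h' : i' = i0
        · subst h'
          rw [Function.update_self, Function.update_of_ne h]
          have := hg1 i (Finset.mem_erase.mpr ⟨h, hi⟩)
          exact (Finset.mem_filter.mp this).2
        · rw [Function.update_of_ne h, Function.update_of_ne h']
          exact hg2 i (Finset.mem_erase.mpr ⟨h, hi⟩) i'
            (Finset.mem_erase.mpr ⟨h', hi'⟩) hne'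

/-- Every family of `n` sets, each consisting of `n` mutually disjoint closed
intervals in `ℝ`, has a system of disjoint representatives of size `n`. -/
theorem stmt_0 (n : ℕ) (hn : 0 < n) (A : Fin n → Fin n → Set ℝ)
    (hint : ∀ i j, ∃ a b : ℝ, a ≤ b ∧ A i j = Set.Icc a b)
    (hdisj : ∀ i, ∀ j k, j ≠ k → Disjoint (A i j) (A i k)) :
    ∃ (σ : Equiv.Perm (Fin n)) (g : Fin n → Fin n),
      ∀ j k : Fin n, j ≠ k → Disjoint (A (σ j) (g j)) (A (σ k) (g k)) := by
  choose a b hle hab using hint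
  obtain ⟨g, _, hg⟩ := sdr_aux n A a b hab hdisj n Finset.univ (by simp)
    (fun _ => Finset.univ) (by simp)
  exact ⟨Equiv.refl _, g, fun j k hjk =>
    hg j (Finset.mem_univ j) k (Finset.mem_univ k) hjk⟩
end

section
/- Every finite nonempty family F of closed intervals in the real line contains a simplicial member, i.e., an interval F ∈ F such that all members of F that intersect F have a point in common. -/
/-- Every finite nonempty family of closed bounded nonempty intervals in `ℝ` contains a
simplicial member: a member such that all members intersecting it share a common point. -/
theorem stmt_1 (F : Finset (Set ℝ)) (hne : F.Nonempty)
    (hint : ∀ s ∈ F, ∃ a b : ℝ, a ≤ b ∧ s = Set.Icc a b) :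
    ∃ s ∈ F, ∃ x : ℝ, ∀ t ∈ F, (t ∩ s).Nonempty → x ∈ t := by
  obtain ⟨s, hs, hmax⟩ := F.exists_max_image (fun s => sInf s) hne
  obtain ⟨a, b, hab, rfl⟩ := hint s hs
  refine ⟨_, hs, a, ?_⟩
  rintro t ht ⟨y, hyt, hys⟩
  obtain ⟨c, d, hcd, rfl⟩ := hint t ht
  have h1 := hmax _ ht
  simp only [csInf_Icc hcd, csInf_Icc hab] at h1
  exact ⟨h1, le_trans hys.1 hyt.2⟩
end

section
/- Let m < n be positive integers, and let A_1,...,A_{n+m-1} be sets, each consisting of m pairwise disjoint horizontal closed line segments in the plane. If the number of distinct horizontal lines containing at least one segment from the union of the A_i is at least m(n-m)+1, then there exists a system of disjoint representatives of size n: n mutually disjoint segments chosen from distinct families A_{p_1},...,A_{p_n}. -/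
/-- Theorem 2.3: families of `m` disjoint horizontal segments meeting at least
`m(n-m)+1` horizontal lines: `n+m-1` such families have an SDR of size `n`. -/
theorem stmt_2 (m n : ℕ) (hm : 0 < m) (hmn : m < n)
    (A : Fin (n + m - 1) → Fin m → Set (ℝ × ℝ))
    (hseg : ∀ i j, ∃ a b y : ℝ, a ≤ b ∧ A i j = Set.Icc a b ×ˢ {y})
    (hdisj : ∀ i, ∀ j k, j ≠ k → Disjoint (A i j) (A i k))
    (Y : Finset ℝ) (hY : m * (n - m) + 1 ≤ Y.card)
    (hYlines : ∀ y ∈ Y, ∃ i j, ∃ p ∈ A i j, p.2 = y) :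
    ∃ (p : Fin n → Fin (n + m - 1)) (g : Fin n → Fin m),
      Function.Injective p ∧
      ∀ j k : Fin n, j ≠ k → Disjoint (A (p j) (g j)) (A (p k) (g k)) := by
  classical
  choose aa bb yv hseg' using hseg
  have hab : ∀ i j, aa i j ≤ bb i j := fun i j => (hseg' i j).1
  have hA : ∀ i j, A i j = Set.Icc (aa i j) (bb i j) ×ˢ ({yv i j} : Set ℝ) :=
    fun i j => (hseg' i j).2
  have hmem1 : ∀ i j (p : ℝ × ℝ), p ∈ A i j →
      (aa i j ≤ p.1 ∧ p.1 ≤ bb i j) ∧ p.2 = yv i j := by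
    intro i j p hp
    rw [hA i j, Set.mem_prod] at hp
    exact ⟨Set.mem_Icc.mp hp.1, Set.mem_singleton_iff.mp hp.2⟩
  have hdiff : ∀ i j u v, yv i j ≠ yv u v → Disjoint (A i j) (A u v) := by
    intro i j u v hne
    rw [Set.disjoint_left]
    intro p hp hq
    exact hne (((hmem1 i j p hp).2).symm.trans ((hmem1 u v p hq).2))
  -- The main recursive extraction lemma.
  have REC : ∀ (k a b : ℕ) (used : Finset (Fin (n + m - 1)))
      (rem : Finset (Fin (n + m - 1) × Fin m)),
      a + b + k = n →
      used.card ≤ a + b →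
      (∀ q ∈ rem, q.1 ∉ used) →
      (∀ i, i ∉ used → m ≤ (rem.filter (fun q => q.1 = i)).card + a) →
      m * (n - m) + 1 ≤ (Y ∩ rem.image (fun q => yv q.1 q.2)).card + (m * b + a) →
      ∃ σ : Fin k → Fin (n + m - 1) × Fin m,
        (∀ x, σ x ∈ rem) ∧
        (∀ x x', x ≠ x' → (σ x).1 ≠ (σ x').1) ∧
        (∀ x x', x ≠ x' → Disjoint (A (σ x).1 (σ x).2) (A (σ x').1 (σ x').2)) := by
    intro k
    induction k with
    | zero =>
      intro a b used rem _ _ _ _ _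
      exact ⟨Fin.elim0, fun x => x.elim0, fun x => x.elim0, fun x => x.elim0⟩
    | succ k ih =>
      intro a b used rem hcnt hucard hru hsize hline
      -- Step 1: there is a remaining segment.
      have hremne : rem.Nonempty := by
        by_cases ham : a < m
        · have h2 : (usedᶜ : Finset (Fin (n + m - 1))).Nonempty := by
            rw [← Finset.card_pos, Finset.card_compl]
            simp only [Fintype.card_fin]
            omega
          obtain ⟨i, hi⟩ := h2
          have hi' : i ∉ used := Finset.mem_compl.mp hi
          have h3 := hsize i hi'
          have h4 : 0 < (rem.filter (fun q => q.1 = i)).card := by omega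
          obtain ⟨q, hq⟩ := Finset.card_pos.mp h4
          exact ⟨q, (Finset.mem_filter.mp hq).1⟩
        · push_neg at ham
          have hbt : b + 1 ≤ n - m := by omega
          obtain ⟨s, hs⟩ := Nat.exists_eq_add_of_le hbt
          have e1 : m * (n - m) = m * b + m + m * s := by rw [hs]; ring
          have e2 : s ≤ m * s := by
            calc s = 1 * s := (one_mul s).symm
            _ ≤ m * s := Nat.mul_le_mul_right s hm
          have e3 : a ≤ m + s := by omega
          have h4 : 0 < (Y ∩ rem.image (fun q => yv q.1 q.2)).card := by
            generalize hg1 : m * (n - m) = P at e1 hline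
            generalize hg2 : m * b = Q at e1 hline
            generalize hg3 : m * s = R at e1 e2
            omega
          obtain ⟨y, hy⟩ := Finset.card_pos.mp h4
          obtain ⟨q, hq, -⟩ := Finset.mem_image.mp (Finset.mem_inter.mp hy).2
          exact ⟨q, hq⟩
      obtain ⟨q₀, hq₀⟩ := hremne
      by_cases hiso : ∃ q ∈ rem, ∀ q' ∈ rem, q'.1 ≠ q.1 →
          Disjoint (A q.1 q.2) (A q'.1 q'.2)
      · -- B-branch: an isolated segment exists; use it and delete its family.
        obtain ⟨c, hcrem, hciso⟩ := hiso
        have hobl1 : a + (b + 1) + k = n := by omega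
        have hobl2 : (insert c.1 used).card ≤ a + (b + 1) := by
          refine le_trans (Finset.card_insert_le _ _) ?_
          omega
        have hobl3 : ∀ q ∈ rem.filter (fun q => q.1 ≠ c.1), q.1 ∉ insert c.1 used := by
          intro q hq
          obtain ⟨hq1, hq2⟩ := Finset.mem_filter.mp hq
          simp only [Finset.mem_insert, not_or]
          exact ⟨hq2, hru q hq1⟩
        have hobl4 : ∀ i, i ∉ insert c.1 used →
            m ≤ ((rem.filter (fun q => q.1 ≠ c.1)).filter (fun q => q.1 = i)).card + a := by
          intro i hi
          simp only [Finset.mem_insert, not_or] at hi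
          have heq : (rem.filter (fun q => q.1 ≠ c.1)).filter (fun q => q.1 = i)
              = rem.filter (fun q => q.1 = i) := by
            ext q
            simp only [Finset.mem_filter]
            constructor
            · rintro ⟨⟨h1, _⟩, h3⟩; exact ⟨h1, h3⟩
            · rintro ⟨h1, h3⟩
              exact ⟨⟨h1, by rw [h3]; exact hi.1⟩, h3⟩
          rw [heq]
          exact hsize i hi.2
        have hobl5 : m * (n - m) + 1 ≤
            (Y ∩ (rem.filter (fun q => q.1 ≠ c.1)).image (fun q => yv q.1 q.2)).card
              + (m * (b + 1) + a) := by
          have hsub : Y ∩ rem.image (fun q => yv q.1 q.2)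
              ⊆ (Y ∩ (rem.filter (fun q => q.1 ≠ c.1)).image (fun q => yv q.1 q.2))
                ∪ ((rem.filter (fun q => q.1 = c.1)).image (fun q => yv q.1 q.2)) := by
            intro y hy
            obtain ⟨hyY, hyI⟩ := Finset.mem_inter.mp hy
            obtain ⟨q, hq, hqy⟩ := Finset.mem_image.mp hyI
            by_cases hqc : q.1 = c.1
            · exact Finset.mem_union_right _
                (Finset.mem_image.mpr ⟨q, Finset.mem_filter.mpr ⟨hq, hqc⟩, hqy⟩)
            · refine Finset.mem_union_left _ (Finset.mem_inter.mpr ⟨hyY, ?_⟩)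
              exact Finset.mem_image.mpr ⟨q, Finset.mem_filter.mpr ⟨hq, hqc⟩, hqy⟩
          have hcard1 : (rem.filter (fun q => q.1 = c.1)).card ≤ m := by
            calc (rem.filter (fun q => q.1 = c.1)).card
                ≤ (Finset.univ : Finset (Fin m)).card := by
                  apply Finset.card_le_card_of_injOn (fun q => q.2)
                    (fun q _ => Finset.mem_univ _)
                  intro q hq q' hq' hqq
                  have h1 : q.1 = c.1 := (Finset.mem_filter.mp (Finset.mem_coe.mp hq)).2
                  have h2 : q'.1 = c.1 := (Finset.mem_filter.mp (Finset.mem_coe.mp hq')).2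
                  exact Prod.ext (h1.trans h2.symm) hqq
              _ = m := by simp
          have hcard2 : (Y ∩ rem.image (fun q => yv q.1 q.2)).card ≤
              (Y ∩ (rem.filter (fun q => q.1 ≠ c.1)).image (fun q => yv q.1 q.2)).card
                + m := by
            refine le_trans (Finset.card_le_card hsub) ?_
            refine le_trans (Finset.card_union_le _ _) ?_
            have := Finset.card_image_le (s := rem.filter (fun q => q.1 = c.1))
              (f := fun q => yv q.1 q.2)
            omega
          have e : m * (b + 1) = m * b + m := by ring
          generalize hg1 : m * (n - m) = P at hline ⊢
          generalize hg2 : m * (b + 1) = Q2 at e ⊢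
          generalize hg3 : m * b = Q at e hline
          omega
        obtain ⟨σ, hσm, hσi, hσd⟩ := ih a (b + 1) (insert c.1 used)
          (rem.filter (fun q => q.1 ≠ c.1)) hobl1 hobl2 hobl3 hobl4 hobl5
        refine ⟨Fin.cons c σ, ?_, ?_, ?_⟩
        · intro x
          rcases Fin.eq_zero_or_eq_succ x with rfl | ⟨u, rfl⟩
          · rw [Fin.cons_zero]; exact hcrem
          · rw [Fin.cons_succ]; exact Finset.mem_of_mem_filter _ (hσm u)
        · intro x x' hxx
          rcases Fin.eq_zero_or_eq_succ x with rfl | ⟨u, rfl⟩ <;>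
            rcases Fin.eq_zero_or_eq_succ x' with rfl | ⟨v, rfl⟩
          · exact absurd rfl hxx
          · rw [Fin.cons_zero, Fin.cons_succ]
            exact fun h => (Finset.mem_filter.mp (hσm v)).2 h.symm
          · rw [Fin.cons_zero, Fin.cons_succ]
            exact (Finset.mem_filter.mp (hσm u)).2
          · rw [Fin.cons_succ, Fin.cons_succ]
            exact hσi u v (fun h => hxx (by rw [h]))
        · intro x x' hxx
          rcases Fin.eq_zero_or_eq_succ x with rfl | ⟨u, rfl⟩ <;>
            rcases Fin.eq_zero_or_eq_succ x' with rfl | ⟨v, rfl⟩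
          · exact absurd rfl hxx
          · rw [Fin.cons_zero, Fin.cons_succ]
            exact hciso (σ v) (Finset.mem_of_mem_filter _ (hσm v))
              ((Finset.mem_filter.mp (hσm v)).2)
          · rw [Fin.cons_zero, Fin.cons_succ]
            exact (hciso (σ u) (Finset.mem_of_mem_filter _ (hσm u))
              ((Finset.mem_filter.mp (hσm u)).2)).symm
          · rw [Fin.cons_succ, Fin.cons_succ]
            exact hσd u v (fun h => hxx (by rw [h]))
      · -- A-branch: no isolated segment.
        push_neg at hiso
        obtain ⟨c, hcS, hcmin⟩ := Finset.exists_min_image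
          (rem.filter (fun q => yv q.1 q.2 = yv q₀.1 q₀.2)) (fun q => bb q.1 q.2)
          ⟨q₀, Finset.mem_filter.mpr ⟨hq₀, rfl⟩⟩
        have hcrem : c ∈ rem := (Finset.mem_filter.mp hcS).1
        have hcy : yv c.1 c.2 = yv q₀.1 q₀.2 := (Finset.mem_filter.mp hcS).2
        set ystar := yv q₀.1 q₀.2 with hystar
        set pt : ℝ × ℝ := (bb c.1 c.2, ystar) with hptdef
        set rem' := rem.filter (fun q => q.1 ≠ c.1 ∧ pt ∉ A q.1 q.2) with hrem'
        have hkey : ∀ q ∈ rem', Disjoint (A c.1 c.2) (A q.1 q.2) := by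
          intro q hq
          have hq' := Finset.mem_filter.mp hq
          have hqrem : q ∈ rem := hq'.1
          have hqpt : pt ∉ A q.1 q.2 := hq'.2.2
          by_cases hyq : yv q.1 q.2 = ystar
          · by_contra hnd
            obtain ⟨x, hx1, hx2⟩ := Set.not_disjoint_iff.mp hnd
            have hx1' := hmem1 c.1 c.2 x hx1
            have hx2' := hmem1 q.1 q.2 x hx2
            have hbbq : bb c.1 c.2 ≤ bb q.1 q.2 :=
              hcmin q (Finset.mem_filter.mpr ⟨hqrem, hyq⟩)
            apply hqpt
            rw [hA q.1 q.2, Set.mem_prod]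
            refine ⟨Set.mem_Icc.mpr ⟨?_, ?_⟩, ?_⟩
            · exact le_trans hx2'.1.1 hx1'.1.2
            · exact hbbq
            · exact Set.mem_singleton_iff.mpr hyq.symm
          · exact hdiff _ _ _ _ (fun h => hyq (h.symm.trans hcy))
        have hobl1 : (a + 1) + b + k = n := by omega
        have hobl2 : (insert c.1 used).card ≤ (a + 1) + b := by
          refine le_trans (Finset.card_insert_le _ _) ?_
          omega
        have hobl3 : ∀ q ∈ rem', q.1 ∉ insert c.1 used := by
          intro q hq
          have hq' := Finset.mem_filter.mp hq
          simp only [Finset.mem_insert, not_or]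
          exact ⟨hq'.2.1, hru q hq'.1⟩
        have hobl4 : ∀ i, i ∉ insert c.1 used →
            m ≤ (rem'.filter (fun q => q.1 = i)).card + (a + 1) := by
          intro i hi
          simp only [Finset.mem_insert, not_or] at hi
          have h1 := hsize i hi.2
          have hTsub : rem.filter (fun q => q.1 = i) ⊆
              (rem'.filter (fun q => q.1 = i)) ∪
              ((rem.filter (fun q => q.1 = i)).filter (fun q => pt ∈ A q.1 q.2)) := by
            intro q hq
            obtain ⟨hq1, hq2⟩ := Finset.mem_filter.mp hq
            by_cases hp : pt ∈ A q.1 q.2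
            · exact Finset.mem_union_right _
                (Finset.mem_filter.mpr ⟨Finset.mem_filter.mpr ⟨hq1, hq2⟩, hp⟩)
            · refine Finset.mem_union_left _ (Finset.mem_filter.mpr ⟨?_, hq2⟩)
              refine Finset.mem_filter.mpr ⟨hq1, ?_, hp⟩
              rw [hq2]; exact hi.1
          have hD : ((rem.filter (fun q => q.1 = i)).filter
              (fun q => pt ∈ A q.1 q.2)).card ≤ 1 := by
            rw [Finset.card_le_one]
            intro q hq q' hq'
            have hqm := Finset.mem_filter.mp hq
            have hq'm := Finset.mem_filter.mp hq'
            have hqi : q.1 = i := (Finset.mem_filter.mp hqm.1).2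
            have hq'i : q'.1 = i := (Finset.mem_filter.mp hq'm.1).2
            by_contra hne
            have hsnd : q.2 ≠ q'.2 := by
              intro h
              exact hne (Prod.ext (hqi.trans hq'i.symm) h)
            have hd := hdisj i q.2 q'.2 hsnd
            rw [Set.disjoint_left] at hd
            have hh1 : pt ∈ A i q.2 := by rw [← hqi]; exact hqm.2
            have hh2 : pt ∈ A i q'.2 := by rw [← hq'i]; exact hq'm.2
            exact hd hh1 hh2
          have hc1 : (rem.filter (fun q => q.1 = i)).card ≤
              (rem'.filter (fun q => q.1 = i)).card + 1 := by
            refine le_trans (Finset.card_le_card hTsub) ?_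
            refine le_trans (Finset.card_union_le _ _) ?_
            omega
          omega
        have hobl5 : m * (n - m) + 1 ≤
            (Y ∩ rem'.image (fun q => yv q.1 q.2)).card + (m * b + (a + 1)) := by
          have hsub : (Y ∩ rem.image (fun q => yv q.1 q.2)).erase ystar ⊆
              Y ∩ rem'.image (fun q => yv q.1 q.2) := by
            intro y hy
            have hyne : y ≠ ystar := Finset.ne_of_mem_erase hy
            have hy' := Finset.mem_of_mem_erase hy
            obtain ⟨hyY, hyI⟩ := Finset.mem_inter.mp hy'
            obtain ⟨q, hqrem, hqy⟩ := Finset.mem_image.mp hyI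
            by_cases hqin : q ∈ rem'
            · exact Finset.mem_inter.mpr ⟨hyY, Finset.mem_image.mpr ⟨q, hqin, hqy⟩⟩
            · have hcases : q.1 = c.1 ∨ pt ∈ A q.1 q.2 := by
                by_contra hcon
                push_neg at hcon
                exact hqin (Finset.mem_filter.mpr ⟨hqrem, hcon.1, hcon.2⟩)
              rcases hcases with hqc | hqpt
              · obtain ⟨q', hq'rem, hq'ne, hq'nd⟩ := hiso q hqrem
                obtain ⟨x, hx1, hx2⟩ := Set.not_disjoint_iff.mp hq'nd
                have e1 := (hmem1 q.1 q.2 x hx1).2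
                have e2 := (hmem1 q'.1 q'.2 x hx2).2
                have hyq' : yv q'.1 q'.2 = y := by rw [← e2, e1, hqy]
                have hq'mem : q' ∈ rem' := by
                  refine Finset.mem_filter.mpr ⟨hq'rem, ?_, ?_⟩
                  · rw [hqc] at hq'ne; exact hq'ne
                  · intro hptq'
                    have e3 := (hmem1 q'.1 q'.2 pt hptq').2
                    have e4 : ystar = yv q'.1 q'.2 := e3
                    exact hyne ((e4.trans hyq').symm)
                exact Finset.mem_inter.mpr
                  ⟨hyY, Finset.mem_image.mpr ⟨q', hq'mem, hyq'⟩⟩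
              · have e3 := (hmem1 q.1 q.2 pt hqpt).2
                have e4 : ystar = yv q.1 q.2 := e3
                exact absurd ((e4.trans hqy).symm) hyne
          have hcard : (Y ∩ rem.image (fun q => yv q.1 q.2)).card ≤
              (Y ∩ rem'.image (fun q => yv q.1 q.2)).card + 1 := by
            by_cases hmemy : ystar ∈ Y ∩ rem.image (fun q => yv q.1 q.2)
            · have h1 := Finset.card_erase_of_mem hmemy
              have h2 := Finset.card_le_card hsub
              have h3 : 0 < (Y ∩ rem.image (fun q => yv q.1 q.2)).card :=
                Finset.card_pos.mpr ⟨_, hmemy⟩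
              omega
            · rw [Finset.erase_eq_of_notMem hmemy] at hsub
              have := Finset.card_le_card hsub
              omega
          generalize hg1 : m * (n - m) = P at hline ⊢
          generalize hg3 : m * b = Q at hline ⊢
          omega
        obtain ⟨σ, hσm, hσi, hσd⟩ := ih (a + 1) b (insert c.1 used) rem'
          hobl1 hobl2 hobl3 hobl4 hobl5
        refine ⟨Fin.cons c σ, ?_, ?_, ?_⟩
        · intro x
          rcases Fin.eq_zero_or_eq_succ x with rfl | ⟨u, rfl⟩
          · rw [Fin.cons_zero]; exact hcrem
          · rw [Fin.cons_succ]; exact Finset.mem_of_mem_filter _ (hσm u)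
        · intro x x' hxx
          rcases Fin.eq_zero_or_eq_succ x with rfl | ⟨u, rfl⟩ <;>
            rcases Fin.eq_zero_or_eq_succ x' with rfl | ⟨v, rfl⟩
          · exact absurd rfl hxx
          · rw [Fin.cons_zero, Fin.cons_succ]
            exact fun h => (Finset.mem_filter.mp (hσm v)).2.1 h.symm
          · rw [Fin.cons_zero, Fin.cons_succ]
            exact (Finset.mem_filter.mp (hσm u)).2.1
          · rw [Fin.cons_succ, Fin.cons_succ]
            exact hσi u v (fun h => hxx (by rw [h]))
        · intro x x' hxx
          rcases Fin.eq_zero_or_eq_succ x with rfl | ⟨u, rfl⟩ <;>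
            rcases Fin.eq_zero_or_eq_succ x' with rfl | ⟨v, rfl⟩
          · exact absurd rfl hxx
          · rw [Fin.cons_zero, Fin.cons_succ]
            exact hkey (σ v) (hσm v)
          · rw [Fin.cons_zero, Fin.cons_succ]
            exact (hkey (σ u) (hσm u)).symm
          · rw [Fin.cons_succ, Fin.cons_succ]
            exact hσd u v (fun h => hxx (by rw [h]))
  -- Apply the recursion to the initial state.
  have hsize0 : ∀ i : Fin (n + m - 1), i ∉ (∅ : Finset (Fin (n + m - 1))) →
      m ≤ ((Finset.univ : Finset (Fin (n + m - 1) × Fin m)).filter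
        (fun q => q.1 = i)).card + 0 := by
    intro i _
    rw [Nat.add_zero]
    have h0 : m = (Finset.univ : Finset (Fin m)).card := by simp
    refine le_trans (le_of_eq h0) ?_
    apply Finset.card_le_card_of_injOn (fun j => (i, j))
    · intro j _
      exact Finset.mem_filter.mpr ⟨Finset.mem_univ _, rfl⟩
    · intro u _ v _ h
      exact congrArg Prod.snd h
  have hline0 : Y ∩ ((Finset.univ : Finset (Fin (n + m - 1) × Fin m)).image
      (fun q => yv q.1 q.2)) = Y := by
    apply Finset.inter_eq_left.mpr
    intro y hy
    obtain ⟨i, j, p, hp, hpy⟩ := hYlines y hy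
    exact Finset.mem_image.mpr
      ⟨(i, j), Finset.mem_univ _, by rw [← hpy]; exact ((hmem1 i j p hp).2).symm⟩
  obtain ⟨σ, hσm, hσi, hσd⟩ := REC n 0 0 ∅ Finset.univ (by omega) (by simp)
    (by simp) hsize0 (by rw [hline0]; simpa using hY)
  refine ⟨fun x => (σ x).1, fun x => (σ x).2, ?_, ?_⟩
  · intro x x' h
    by_contra hne
    exact hσi x x' hne h
  · intro j k hjk
    exact hσd j k hjk
end

section
/- For all positive integers m < n, there exists an infinite sequence of families A_1, A_2, ..., each consisting of m pairwise disjoint horizontal closed line segments lying on exactly m(n-m) distinct horizontal lines in total, such that no finite subcollection admits a system of disjoint representatives of size n. (Construction: partition m(n-m) segments on distinct horizontal lines into n-m blocks X_1,...,X_{n-m} of size m, set A_i = X_i for i ≤ n-m-1 and A_i = X_{n-m} for i ≥ n-m.) -/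
private lemma disj_lines {a b : ℝ} {s : Set ℝ} (h : a ≠ b) :
    Disjoint (s ×ˢ ({a} : Set ℝ)) (s ×ˢ ({b} : Set ℝ)) := by
  rw [Set.disjoint_left]
  rintro ⟨x, y⟩ ⟨-, hy1⟩ ⟨-, hy2⟩
  simp only [Set.mem_singleton_iff] at hy1 hy2
  exact h (hy1 ▸ hy2)

/-- There is an infinite sequence of families, each of `m` pairwise disjoint horizontal
closed segments, all lying on exactly `m(n-m)` horizontal lines in total, admitting
no SDR of size `n` from any (finite) subcollection. -/
theorem stmt_3 (m n : ℕ) (hm : 0 < m) (hmn : m < n) :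
    ∃ A : ℕ → Fin m → Set (ℝ × ℝ),
      (∀ i, ∀ j k, j ≠ k → Disjoint (A i j) (A i k)) ∧
      (∃ Y : Finset ℝ, Y.card = m * (n - m) ∧
        (∀ i j, ∃ a b : ℝ, a ≤ b ∧ ∃ y ∈ Y, A i j = Set.Icc a b ×ˢ {y}) ∧
        (∀ y ∈ Y, ∃ i j, ∃ p ∈ A i j, p.2 = y)) ∧
      ¬ ∃ (p : Fin n → ℕ) (g : Fin n → Fin m),
          Function.Injective p ∧
          ∀ j k : Fin n, j ≠ k → Disjoint (A (p j) (g j)) (A (p k) (g k)) := by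
  set line : ℕ → Fin m → ℕ := fun i j => (min i (n - m - 1)) * m + j with hline
  refine ⟨fun i j => Set.Icc (0:ℝ) 1 ×ˢ {((line i j : ℕ) : ℝ)}, ?_, ?_, ?_⟩
  · intro i j k hjk
    apply disj_lines
    have : line i j ≠ line i k := by
      simp only [hline]
      have := Fin.val_ne_of_ne hjk
      omega
    exact_mod_cast this
  · refine ⟨(Finset.range (m * (n - m))).image (Nat.cast : ℕ → ℝ), ?_, ?_, ?_⟩
    · rw [Finset.card_image_of_injective _ Nat.cast_injective, Finset.card_range]
    · intro i j
      refine ⟨0, 1, zero_le_one, ((line i j : ℕ) : ℝ), ?_, rfl⟩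
      simp only [Finset.mem_image, Finset.mem_range]
      refine ⟨line i j, ?_, rfl⟩
      have h1 : min i (n - m - 1) ≤ n - m - 1 := min_le_right _ _
      have h2 : (j : ℕ) < m := j.isLt
      have h3 : min i (n - m - 1) * m ≤ (n - m - 1) * m := Nat.mul_le_mul_right _ h1
      have h4 : (n - m - 1) * m + m = (n - m) * m := by
        rw [← Nat.succ_mul]; congr 1; omega
      simp only [hline]
      have h5 : (n - m) * m = m * (n - m) := Nat.mul_comm _ _
      omega
    · intro y hy
      simp only [Finset.mem_image, Finset.mem_range] at hy
      obtain ⟨ℓ, hℓ, rfl⟩ := hy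
      refine ⟨ℓ / m, ⟨ℓ % m, Nat.mod_lt _ hm⟩, ((0:ℝ), (ℓ:ℝ)), ?_, rfl⟩
      have ht : ℓ / m ≤ n - m - 1 := by
        have : ℓ / m < n - m := Nat.div_lt_of_lt_mul (by omega)
        omega
      have hle : line (ℓ / m) ⟨ℓ % m, Nat.mod_lt _ hm⟩ = ℓ := by
        simp only [hline, min_eq_left ht]
        exact Nat.div_add_mod' ℓ m
      exact ⟨Set.mem_Icc.2 ⟨le_refl _, zero_le_one⟩, by simp [hle]⟩
  · rintro ⟨p, g, hp, hdis⟩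
    set F : Fin n → ℕ × Fin m :=
      fun j => (min (p j) (n - m - 1), if n - m - 1 ≤ p j then g j else ⟨0, hm⟩) with hF
    set T : Finset (ℕ × Fin m) :=
      ((Finset.range (n - m - 1)).image fun t => (t, (⟨0, hm⟩ : Fin m))) ∪
        (Finset.univ.image fun a => (n - m - 1, a)) with hT
    have hmap : ∀ j, F j ∈ T := by
      intro j
      simp only [hF, hT, Finset.mem_union, Finset.mem_image, Finset.mem_range]
      by_cases h : n - m - 1 ≤ p j
      · exact Or.inr ⟨g j, Finset.mem_univ _, by rw [min_eq_right h, if_pos h]⟩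
      · exact Or.inl ⟨p j, by omega, by rw [min_eq_left (by omega), if_neg h]⟩
    have hinj : Function.Injective F := by
      intro j k hjk
      by_contra hne
      have h1 := congrArg Prod.fst hjk
      have h2 := congrArg Prod.snd hjk
      simp only [hF] at h1 h2
      by_cases hj : n - m - 1 ≤ p j
      · by_cases hk : n - m - 1 ≤ p k
        · rw [if_pos hj, if_pos hk] at h2
          have heq : line (p j) (g j) = line (p k) (g k) := by
            simp only [hline, min_eq_right hj, min_eq_right hk, h2]
          have hd := hdis j k hne
          simp only at hd
          rw [heq] at hd
          have hmem : ((0:ℝ), ((line (p k) (g k) : ℕ) : ℝ)) ∈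
              Set.Icc (0:ℝ) 1 ×ˢ ({((line (p k) (g k) : ℕ) : ℝ)} : Set ℝ) :=
            ⟨Set.mem_Icc.2 ⟨le_refl _, zero_le_one⟩, rfl⟩
          exact Set.disjoint_left.1 hd hmem hmem
        · rw [min_eq_right hj, min_eq_left (by omega)] at h1
          omega
      · by_cases hk : n - m - 1 ≤ p k
        · rw [min_eq_left (by omega), min_eq_right hk] at h1
          omega
        · rw [min_eq_left (by omega), min_eq_left (by omega)] at h1
          exact hne (hp h1)
    have hcard : n ≤ T.card := by
      calc n = Fintype.card (Fin n) := (Fintype.card_fin n).symm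
        _ = (Finset.univ.image F).card :=
            (Finset.card_image_of_injective _ hinj).symm
        _ ≤ T.card := Finset.card_le_card (by
            intro x hx
            simp only [Finset.mem_image, Finset.mem_univ] at hx
            obtain ⟨j, -, rfl⟩ := hx
            exact hmap j)
    have hTcard : T.card ≤ (n - m - 1) + m := by
      refine le_trans (Finset.card_union_le _ _) ?_
      gcongr
      · exact le_trans (Finset.card_image_le) (by rw [Finset.card_range])
      · exact le_trans (Finset.card_image_le) (by simp)
    omega
end

section
/- Let c_1,...,c_m : [0,1] → ℝ² be simple curves (injective continuous maps) whose pairwise intersections form a finite set V = {v_1,...,v_p}, none of which is an endpoint of any curve. Suppose each v_i lies on exactly q_i of the curves. Let J be the set of all closed segments of the curves (images of closed subintervals). Then for every n, any family of (∏_{j=1}^p q_j)·n sets, each consisting of n pairwise disjoint members of J, admits a system of disjoint representatives of size n. -/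
/-!
Record, for each family and each vertex `v a`, the curve carrying the segment of the family
through `v a`. There are `∏ q_a` possible records, so `n` of the families share one. Segments of
two such families lying on different curves could only meet at a vertex, where both families use
the same curve; hence they are disjoint. Among segments of one curve, injectivity reduces
disjointness to that of parameter intervals, and placing the parameter intervals of all curves
side by side in the lexicographic order of `Fin m × ℝ` leaves a problem about intervals of a
line. That one is solved greedily: take the interval with the leftmost right endpoint, discard
its family and every interval meeting it (at most one per family, as they all contain that
right endpoint), and recurse.
-/

open Set Function
open scoped Finset

section Lex

variable {κ α X : Type*} [PartialOrder κ] [Preorder α]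

def lexIcc (i : κ) (J : NonemptyInterval α) : NonemptyInterval (κ ×ₗ α) :=
  ⟨(toLex (i, J.fst), toLex (i, J.snd)), Prod.Lex.toLex_le_toLex.2 (Or.inr ⟨rfl, J.fst_le_snd⟩)⟩

theorem coe_lexIcc (i : κ) (J : NonemptyInterval α) :
    (lexIcc i J : Set (κ ×ₗ α)) = toLex '' ({i} ×ˢ (J : Set α)) := by
  ext z
  obtain ⟨⟨k, u⟩, rfl⟩ := toLex.surjective z
  simp only [lexIcc, Set.mem_Icc, Prod.Lex.toLex_le_toLex, toLex.injective.mem_set_image]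
  constructor
  · rintro ⟨h₁ | ⟨rfl, h₁⟩, h₂ | ⟨h, h₂⟩⟩
    · exact absurd (h₁.trans h₂) (lt_irrefl i)
    · exact absurd h₁ (h ▸ lt_irrefl k)
    · exact absurd h₂ (lt_irrefl i)
    · exact ⟨rfl, h₁, h₂⟩
  · rintro ⟨rfl, h₁, h₂⟩
    exact ⟨Or.inr ⟨rfl, h₁⟩, Or.inr ⟨rfl, h₂⟩⟩

theorem disjoint_lexIcc_iff {i i' : κ} {J J' : NonemptyInterval α} :
    Disjoint (lexIcc i J : Set (κ ×ₗ α)) (lexIcc i' J') ↔ i ≠ i' ∨ Disjoint (J : Set α) J' := by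
  rw [coe_lexIcc, coe_lexIcc, disjoint_image_iff toLex.injective, disjoint_prod,
    Set.disjoint_singleton]

theorem disjoint_lexIcc_of_disjoint_image {c : κ → α → X} {i i' : κ} {J J' : NonemptyInterval α}
    (h : Disjoint (c i '' J) (c i' '' J')) :
    Disjoint (lexIcc i J : Set (κ ×ₗ α)) (lexIcc i' J') := by
  rw [disjoint_lexIcc_iff, or_iff_not_imp_left, not_not]
  rintro rfl
  exact h.of_image

theorem disjoint_image_of_disjoint_lexIcc {f : α → X} {u : Set α} (hf : InjOn f u) {i : κ}
    {J J' : NonemptyInterval α} (hJ : (J : Set α) ⊆ u) (hJ' : (J' : Set α) ⊆ u)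
    (h : Disjoint (lexIcc i J : Set (κ ×ₗ α)) (lexIcc i J')) : Disjoint (f '' J) (f '' J') :=
  ((disjoint_lexIcc_iff.1 h).resolve_left (not_not.2 rfl)).image hf hJ hJ'

end Lex

theorem pairwise_disjoint_fin_cons {β : Type*} [PartialOrder β] [OrderBot β] {n : ℕ} {b : β}
    {f : Fin n → β} (hb : ∀ j, Disjoint b (f j)) (hf : Pairwise (Disjoint on f)) :
    Pairwise (Disjoint on (Fin.cons b f : Fin (n + 1) → β)) := by
  intro j k hjk
  cases j using Fin.cases <;> cases k using Fin.cases
  · exact absurd rfl hjk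
  · exact hb _
  · exact (hb _).symm
  · exact hf (ne_of_apply_ne Fin.succ hjk)

section Greedy

variable {α ι κ : Type*} [LinearOrder α]

theorem card_le_card_filter_lt_fst_add_one {B : Finset κ} {I : κ → NonemptyInterval α}
    (hB : (B : Set κ).PairwiseDisjoint fun b => (I b : Set α)) {t : α}
    (ht : ∀ b ∈ B, t ≤ (I b).snd) : #B ≤ #{b ∈ B | t < (I b).fst} + 1 := by
  have hle : #{b ∈ B | ¬t < (I b).fst} ≤ 1 := Finset.card_le_one.2 fun b hb b' hb' => by
    rw [Finset.mem_filter, not_lt] at hb hb'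
    exact hB.elim_set hb.1 hb'.1 t ⟨hb.2, ht b hb.1⟩ ⟨hb'.2, ht b' hb'.1⟩
  have := Finset.card_filter_add_card_filter_not (s := B) (p := fun b => t < (I b).fst)
  omega

theorem exists_injective_pairwise_disjoint_nonemptyInterval [DecidableEq ι]
    (I : ι → κ → NonemptyInterval α) (n : ℕ) (S : Finset ι) (B : ι → Finset κ)
    (hS : n ≤ #S) (hB : ∀ x ∈ S, n ≤ #(B x))
    (hdisj : ∀ x ∈ S, (B x : Set κ).PairwiseDisjoint fun b => (I x b : Set α)) :
    ∃ (P : Fin n → ι) (g : Fin n → κ), Injective P ∧ (∀ j, P j ∈ S ∧ g j ∈ B (P j)) ∧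
      Pairwise (Disjoint on fun j => (I (P j) (g j) : Set α)) := by
  induction n generalizing S B with
  | zero => exact ⟨Fin.elim0, Fin.elim0, injective_of_subsingleton _, fun j => j.elim0,
      fun j => j.elim0⟩
  | succ n ih =>
    obtain ⟨x, hx⟩ : S.Nonempty := Finset.card_pos.1 (by omega)
    obtain ⟨b, hb⟩ : (B x).Nonempty := Finset.card_pos.1 (by have := hB x hx; omega)
    obtain ⟨⟨x₀, b₀⟩, h₀, hmin⟩ := (S.sigma B).exists_min_image (fun y => (I y.1 y.2).snd)
      ⟨⟨x, b⟩, Finset.mem_sigma.2 ⟨hx, hb⟩⟩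
    rw [Finset.mem_sigma] at h₀
    set t₀ := (I x₀ b₀).snd
    have ht₀ : ∀ x ∈ S, ∀ b ∈ B x, t₀ ≤ (I x b).snd := fun x hx b hb =>
      hmin ⟨x, b⟩ (Finset.mem_sigma.2 ⟨hx, hb⟩)
    have hB' : ∀ x ∈ S.erase x₀, n ≤ #{b ∈ B x | t₀ < (I x b).fst} := fun x hx => by
      have hx := Finset.mem_of_mem_erase hx
      have := card_le_card_filter_lt_fst_add_one (hdisj x hx) (ht₀ x hx)
      have := hB x hx
      omega
    obtain ⟨P, g, hP, hPg, hdisjPg⟩ := ih (S.erase x₀) (fun x => {b ∈ B x | t₀ < (I x b).fst})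
      (by rw [Finset.card_erase_of_mem h₀.1]; omega) hB'
      (fun x hx => (hdisj x (Finset.mem_of_mem_erase hx)).subset (Finset.filter_subset _ _))
    refine ⟨Fin.cons x₀ P, Fin.cons b₀ g, ?_, ?_, ?_⟩
    · exact Fin.cons_injective_iff.2
        ⟨fun ⟨j, hj⟩ => Finset.notMem_erase x₀ S (hj ▸ (hPg j).1), hP⟩
    · refine Fin.cases h₀ fun j => ?_
      simp only [Fin.cons_succ]
      exact ⟨Finset.mem_of_mem_erase (hPg j).1, Finset.mem_of_mem_filter _ (hPg j).2⟩
    · have hcons : (fun j => (I ((Fin.cons x₀ P : Fin (n + 1) → ι) j)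
          ((Fin.cons b₀ g : Fin (n + 1) → κ) j) : Set α)) =
          Fin.cons (I x₀ b₀ : Set α) fun j => (I (P j) (g j) : Set α) := by
        funext j
        cases j using Fin.cases <;> rfl
      rw [hcons]
      refine pairwise_disjoint_fin_cons (fun j => ?_) hdisjPg
      rw [Set.disjoint_left]
      exact fun z hz hz' => (hz.2.trans_lt (Finset.mem_filter.1 (hPg j).2).2).not_ge hz'.1

end Greedy

theorem exists_le_card_disjoint_of_curve_ne {ι κ β X : Type*} [Fintype ι] [Fintype κ] {p : ℕ}
    (K : κ → Set X) (v : Fin p → X)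
    (hV : (⋃ i, ⋃ j, ⋃ (_ : i ≠ j), K i ∩ K j) = range v)
    (F : ι → β → Set X) (curve : ι → β → κ) (hFK : ∀ x b, F x b ⊆ K (curve x b))
    (hdisj : ∀ x, Pairwise (Disjoint on F x)) {n : ℕ}
    (hcard : (∏ a, {i | v a ∈ K i}.ncard) * n ≤ Fintype.card ι) :
    ∃ S : Finset ι, n ≤ #S ∧
      ∀ x ∈ S, ∀ y ∈ S, ∀ b b', curve x b ≠ curve y b' → Disjoint (F x b) (F y b') := by
  classical
  have hmem : ∀ z ∈ range v, ∃ i, z ∈ K i := by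
    rw [← hV]
    simp only [mem_iUnion]
    exact fun z ⟨i, _, _, hz⟩ => ⟨i, hz.1⟩
  have htype : ∀ x a, ∃ i : {i | v a ∈ K i}, ∀ b, v a ∈ F x b → curve x b = i := by
    intro x a
    by_cases h : ∃ b, v a ∈ F x b
    · obtain ⟨b, hb⟩ := h
      refine ⟨⟨curve x b, hFK x b hb⟩, fun b' hb' => ?_⟩
      by_contra hne
      exact Set.disjoint_left.1 (hdisj x (ne_of_apply_ne (curve x) hne)) hb' hb
    · obtain ⟨i, hi⟩ := hmem (v a) (mem_range_self a)
      exact ⟨⟨i, hi⟩, fun b hb => absurd ⟨b, hb⟩ h⟩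
  choose τ hτ using htype
  have : Nonempty (∀ a, {i | v a ∈ K i}) :=
    ⟨fun a => ⟨_, (hmem (v a) (mem_range_self a)).choose_spec⟩⟩
  obtain ⟨τ₀, hτ₀⟩ := Fintype.exists_le_card_fiber_of_mul_le_card (f := τ) (n := n) (by
    rw [Fintype.card_pi]
    simpa only [Set.ncard_eq_toFinset_card', Set.toFinset_card] using hcard)
  refine ⟨_, hτ₀, fun x hx y hy b b' hne => Set.disjoint_left.2 fun z hzx hzy => hne ?_⟩
  obtain ⟨a, rfl⟩ : z ∈ range v := by
    rw [← hV]
    simp only [mem_iUnion]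
    exact ⟨_, _, hne, hFK x b hzx, hFK y b' hzy⟩
  rw [hτ x a b hzx, hτ y a b' hzy, (Finset.mem_filter.1 hx).2, (Finset.mem_filter.1 hy).2]

theorem stmt_4_general (m p n : ℕ)
    (c : Fin m → ℝ → ℝ × ℝ)
    (hinj : ∀ i, Set.InjOn (c i) (Set.Icc 0 1))
    (v : Fin p → ℝ × ℝ)
    (hV : (⋃ i, ⋃ j, ⋃ (_ : i ≠ j), (c i '' Set.Icc 0 1 ∩ c j '' Set.Icc 0 1))
        = Set.range v)
    (q : Fin p → ℕ)
    (hq : ∀ a, q a = {i : Fin m | v a ∈ c i '' Set.Icc 0 1}.ncard)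
    (F : Fin ((∏ a, q a) * n) → Fin n → Set (ℝ × ℝ))
    (hF : ∀ x b, ∃ i, ∃ s t : ℝ, 0 ≤ s ∧ s ≤ t ∧ t ≤ 1 ∧ F x b = c i '' Set.Icc s t)
    (hdisj : ∀ x, ∀ b b', b ≠ b' → Disjoint (F x b) (F x b')) :
    ∃ (P : Fin n → Fin ((∏ a, q a) * n)) (g : Fin n → Fin n),
      Function.Injective P ∧
      ∀ j k : Fin n, j ≠ k → Disjoint (F (P j) (g j)) (F (P k) (g k)) := by
  classical
  choose curve s t hs hst ht hFcur using hF
  let J x b : NonemptyInterval ℝ := ⟨(s x b, t x b), hst x b⟩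
  have hFJ : ∀ x b, F x b = c (curve x b) '' J x b := hFcur
  have hJ : ∀ x b, (J x b : Set ℝ) ⊆ Icc 0 1 := fun x b => Icc_subset_Icc (hs x b) (ht x b)
  obtain ⟨S, hSn, hS⟩ := exists_le_card_disjoint_of_curve_ne (fun i => c i '' Icc 0 1) v hV F curve
    (fun x b => hFJ x b ▸ image_mono (hJ x b)) hdisj (n := n)
    (by simp only [← hq, Fintype.card_fin, le_rfl])
  obtain ⟨P, g, hP, hPS, hPg⟩ := exists_injective_pairwise_disjoint_nonemptyInterval
    (fun x b => lexIcc (curve x b) (J x b)) n S (fun _ => Finset.univ) hSn (by simp)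
    fun x _ b _ b' _ hb =>
      disjoint_lexIcc_of_disjoint_image (hFJ x b ▸ hFJ x b' ▸ hdisj x b b' hb)
  refine ⟨P, g, hP, fun j k hjk => ?_⟩
  by_cases hcur : curve (P j) (g j) = curve (P k) (g k)
  · have hlex := hPg hjk
    simp only [onFun, hcur] at hlex
    rw [hFJ, hFJ, hcur]
    exact disjoint_image_of_disjoint_lexIcc (hinj _) (hJ _ _) (hJ _ _) hlex
  · exact hS _ (hPS j).1 _ (hPS k).1 _ _ hcur

/-- Lemma 3.1: simple curves `c₁,…,c_m : [0,1] → ℝ²` whose pairwise intersections form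
a finite set `V = {v₁,…,v_p}` of non-endpoints, `v_a` lying on exactly `q_a` curves.
Then `(∏ q_a) · n` families, each of `n` disjoint segments of the curves, have an
SDR of size `n`. -/
theorem stmt_4 (m p n : ℕ) (hn : 0 < n)
    (c : Fin m → ℝ → ℝ × ℝ)
    (hcont : ∀ i, ContinuousOn (c i) (Set.Icc 0 1))
    (hinj : ∀ i, Set.InjOn (c i) (Set.Icc 0 1))
    (v : Fin p → ℝ × ℝ) (hv : Function.Injective v)
    (hV : (⋃ i, ⋃ j, ⋃ (_ : i ≠ j), (c i '' Set.Icc 0 1 ∩ c j '' Set.Icc 0 1))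
        = Set.range v)
    (hend : ∀ a i, v a ≠ c i 0 ∧ v a ≠ c i 1)
    (q : Fin p → ℕ)
    (hq : ∀ a, q a = {i : Fin m | v a ∈ c i '' Set.Icc 0 1}.ncard)
    (F : Fin ((∏ a, q a) * n) → Fin n → Set (ℝ × ℝ))
    (hF : ∀ x b, ∃ i, ∃ s t : ℝ, 0 ≤ s ∧ s ≤ t ∧ t ≤ 1 ∧ F x b = c i '' Set.Icc s t)
    (hdisj : ∀ x, ∀ b b', b ≠ b' → Disjoint (F x b) (F x b')) :
    ∃ (P : Fin n → Fin ((∏ a, q a) * n)) (g : Fin n → Fin n),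
      Function.Injective P ∧
      ∀ j k : Fin n, j ≠ k → Disjoint (F (P j) (g j)) (F (P k) (g k)) :=
  stmt_4_general m p n c hinj v hV q hq F hF hdisj
end

section
/- For all positive integers n and k, there exists a positive integer N such that the following holds. Let U be a set of k direction vectors in the plane and let J_U be the set of all line segments in the plane parallel to some direction in U. Then any N families, each consisting of n pairwise disjoint segments in J_U, admit a system of disjoint representatives of size n. -/
/-!
By pigeonhole, many families use the same direction `d i` for their `i`-th segment, and by
Ramsey's theorem for colourings of pairs we may pass to families `F₀, F₁, …` in which whether the
`i`-th segment of an earlier family is disjoint from the `j`-th segment of a later one depends only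
on `(i, j)`. If this holds for some `i = j`, the `i`-th segments of all families form an SDR.
Otherwise the `i`-th segments of all families lie on one line, and if the `i`-th segment of an
earlier family meets the `j`-th segment of a later one, the lines of `i` and `j` share two points
and coincide. Projecting that line injectively to `ℝ`, a sign-and-position key (`meetKey`) shows
that "`i` meets a later `j`" is contained in a strict order, so after sorting the indices by the key
the `a`-th family can contribute its `g a`-th segment.
-/

open Set Function

section Ramsey

variable {α C : Type*} [LinearOrder α] [Fintype C] [Nonempty C]

theorem exists_subset_card_eq_leftMonochromatic (f : α → α → C) :
    ∀ (L : ℕ) (s : Finset α), (Fintype.card C + 1) ^ L ≤ s.card →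
      ∃ t ⊆ s, t.card = L ∧ ∃ col : α → C, ∀ a ∈ t, ∀ b ∈ t, a < b → f a b = col a := by
  classical
  intro L
  induction L with
  | zero =>
    exact fun s _ => ⟨∅, Finset.empty_subset s, rfl, fun _ => Classical.arbitrary C, by simp⟩
  | succ L ih =>
    intro s hs
    have hs₀ : s.Nonempty := Finset.card_pos.mp (lt_of_lt_of_le (by positivity) hs)
    set a := s.min' hs₀
    have hcard : Fintype.card C * (Fintype.card C + 1) ^ L ≤ (s.erase a).card := by
      have h₁ := Finset.card_erase_add_one (s.min'_mem hs₀)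
      have h₂ := Nat.one_le_pow L (Fintype.card C + 1) (by omega)
      rw [pow_succ] at hs
      nlinarith
    obtain ⟨c, -, hc⟩ := Finset.exists_le_card_fiber_of_mul_le_card_of_maps_to
      (fun _ _ => Finset.mem_univ (f a _)) Finset.univ_nonempty (by simpa using hcard)
    obtain ⟨t, hts, htcard, col, hcol⟩ := ih _ hc
    have hts' : ∀ y ∈ t, y ∈ s.erase a ∧ f a y = c := fun y hy => Finset.mem_filter.mp (hts hy)
    have ha : a ∉ t := fun h => by simpa using (hts' a h).1
    have hsub : insert a t ⊆ s :=
      Finset.insert_subset (s.min'_mem hs₀) fun y hy => Finset.mem_of_mem_erase (hts' y hy).1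
    refine ⟨insert a t, hsub, by rw [Finset.card_insert_of_notMem ha, htcard],
      Function.update col a c, fun x hx y hy hxy => ?_⟩
    have hy' : y ∈ t := (Finset.mem_insert.mp hy).resolve_left fun hya =>
      (s.min'_le x (hsub hx)).not_gt (hxy.trans_eq hya)
    rcases Finset.mem_insert.mp hx with rfl | hx'
    · simpa using (hts' y hy').2
    · rw [Function.update_of_ne (ne_of_mem_of_not_mem hx' ha)]
      exact hcol x hx' y hy' hxy

theorem exists_orderEmbedding_monochromatic (f : α → α → C) (m : ℕ) {s : Finset α}
    (hs : (Fintype.card C + 1) ^ (Fintype.card C * m) ≤ s.card) :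
    ∃ (e : Fin m ↪o α) (c : C), (∀ i, e i ∈ s) ∧ ∀ i j, i < j → f (e i) (e j) = c := by
  classical
  obtain ⟨t, hts, htcard, col, hcol⟩ := exists_subset_card_eq_leftMonochromatic f _ s hs
  obtain ⟨c, -, hc⟩ := Finset.exists_le_card_fiber_of_mul_le_card_of_maps_to
    (f := col) (s := t) (n := m) (fun _ _ => Finset.mem_univ _) Finset.univ_nonempty
    (by simp [htcard])
  obtain ⟨u, hut, hucard⟩ := Finset.exists_subset_card_eq hc
  have hu : ∀ i, u.orderEmbOfFin hucard i ∈ t ∧ col (u.orderEmbOfFin hucard i) = c :=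
    fun i => Finset.mem_filter.mp (hut (u.orderEmbOfFin_mem hucard i))
  refine ⟨u.orderEmbOfFin hucard, c, fun i => hts (hu i).1, fun i j hij => ?_⟩
  rw [hcol _ (hu i).1 _ (hu j).1 ((u.orderEmbOfFin hucard).strictMono hij), (hu i).2]

end Ramsey

theorem exists_perm_forall_lt_not_rel {n : ℕ} {β : Type*} [LinearOrder β]
    (r : Fin n → Fin n → Prop) (κ : Fin n → β) (h : ∀ i j, i ≠ j → r i j → κ j < κ i) :
    ∃ σ : Equiv.Perm (Fin n), ∀ a b, a < b → ¬r (σ a) (σ b) :=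
  ⟨Tuple.sort κ, fun _ _ hab hr =>
    (h _ _ ((Tuple.sort κ).injective.ne hab.ne) hr).not_ge (Tuple.monotone_sort κ hab.le)⟩

theorem Set.OrdConnected.forall_lt_of_disjoint {α : Type*} [LinearOrder α] {A B : Set α}
    (hA : A.OrdConnected) (hB : B.OrdConnected) (hAB : Disjoint A B) {a b : α} (ha : a ∈ A)
    (hb : b ∈ B) (hab : a < b) : ∀ a' ∈ A, ∀ b' ∈ B, a' < b' := by
  intro a' ha' b' hb'
  by_contra! h
  rcases le_or_gt a b' with h₁ | h₁
  · exact hAB.ne_of_mem (hA.out ha ha' ⟨h₁, h⟩) hb' rfl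
  · exact hAB.ne_of_mem ha (hB.out hb' hb ⟨h₁.le, hab.le⟩) rfl

open Classical in
noncomputable def meetKey (A B : Set ℝ) (x : ℝ) : Lex (Bool × ℝ) :=
  if ∃ y ∈ B, ∀ z ∈ A, y < z then toLex (false, -x) else toLex (true, x)

theorem meetKey_lt_meetKey {A₁ B₁ A₂ B₂ : Set ℝ} {x₁ x₂ : ℝ} (hA₁ : A₁.OrdConnected)
    (hA₂ : A₂.OrdConnected) (hB₁ : B₁.OrdConnected) (hB₂ : B₂.OrdConnected)
    (hA : Disjoint A₁ A₂) (hB : Disjoint B₁ B₂) (hx₁ : x₁ ∈ A₁ ∩ B₁) (hx₂ : x₂ ∈ A₂ ∩ B₂)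
    (hAB : (A₁ ∩ B₂).Nonempty) : meetKey A₂ B₂ x₂ < meetKey A₁ B₁ x₁ := by
  obtain ⟨w, hwA, hwB⟩ := hAB
  rcases lt_or_gt_of_ne (hA.ne_of_mem hx₁.1 hx₂.1) with hx | hx
  · have h₂ : ∃ y ∈ B₂, ∀ z ∈ A₂, y < z :=
      ⟨w, hwB, hA₁.forall_lt_of_disjoint hA₂ hA hx₁.1 hx₂.1 hx w hwA⟩
    unfold meetKey
    rw [if_pos h₂]
    split_ifs <;> simp [Prod.Lex.toLex_lt_toLex, hx]
  · have hw : ∀ z ∈ B₁, w < z := hB₂.forall_lt_of_disjoint hB₁ hB.symm hx₂.2 hx₁.2 hx w hwB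
    have h₁ : ¬∃ y ∈ B₁, ∀ z ∈ A₁, y < z := fun ⟨y, hyB, hy⟩ => (hy w hwA).not_gt (hw y hyB)
    unfold meetKey
    rw [if_neg h₁]
    split_ifs <;> simp [Prod.Lex.toLex_lt_toLex, hx]

section Segments

variable {E : Type*} [AddCommGroup E] [Module ℝ E]

def IsSegment (u : E) (S : Set E) : Prop :=
  ∃ v : E, ∃ s t : ℝ, s ≤ t ∧ S = (fun r : ℝ => r • u + v) '' Icc s t

def line (p u : E) : Set E := range fun t : ℝ => t • u + p

theorem mem_line_self (p u : E) : p ∈ line p u := ⟨0, by simp⟩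

theorem line_subset_of_mem_of_mem {p q u w z₁ z₂ : E} (hz : z₁ ≠ z₂)
    (h₁ : z₁ ∈ line p u) (h₂ : z₂ ∈ line p u) (h₁' : z₁ ∈ line q w) (h₂' : z₂ ∈ line q w) :
    line q w ⊆ line p u := by
  obtain ⟨b₁, rfl⟩ := h₁
  obtain ⟨b₂, rfl⟩ := h₂
  obtain ⟨a₁, ha₁⟩ := h₁'
  obtain ⟨a₂, ha₂⟩ := h₂'
  have ha : a₂ - a₁ ≠ 0 := sub_ne_zero.mpr fun h => hz (by rw [← ha₁, ← ha₂, h])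
  have hw : w = ((b₂ - b₁) / (a₂ - a₁)) • u := by
    rw [div_eq_inv_mul, mul_smul, eq_inv_smul_iff₀ ha]
    linear_combination (norm := module) ha₂ - ha₁
  rintro _ ⟨t, rfl⟩
  refine ⟨b₁ + (t - a₁) * ((b₂ - b₁) / (a₂ - a₁)), ?_⟩
  linear_combination (norm := module) -ha₁ - (t - a₁) • hw

theorem injOn_line {φ : Module.Dual ℝ E} {u : E} (hu : φ u ≠ 0) (p : E) :
    InjOn φ (line p u) := by
  rintro _ ⟨s, rfl⟩ _ ⟨t, rfl⟩ h
  simp only [map_add, map_smul, smul_eq_mul, add_left_inj] at h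
  rw [mul_right_cancel₀ hu h]

theorem IsSegment.convex {u : E} {S : Set E} (hS : IsSegment u S) : Convex ℝ S := by
  obtain ⟨v, s, t, -, rfl⟩ := hS
  convert ((convex_Icc s t).is_linear_image (IsLinearMap.isLinearMap_smul' u)).translate v using 1
  simp only [image_image, add_comm v]

theorem IsSegment.subset_line {u p z : E} {S : Set E} (hS : IsSegment u S) (hzS : z ∈ S)
    (hz : z ∈ line p u) : S ⊆ line p u := by
  obtain ⟨v, s, t, -, rfl⟩ := hS
  obtain ⟨r₀, -, rfl⟩ := hzS
  obtain ⟨t₀, ht₀⟩ := hz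
  rintro _ ⟨r, -, rfl⟩
  exact ⟨r - r₀ + t₀, by linear_combination (norm := module) ht₀⟩

theorem exists_key_forall_meet_lt {ι : Type*} {φ : Module.Dual ℝ E} {d : ι → E}
    (hφ : ∀ i, φ (d i) ≠ 0) {S₀ S₁ S₂ : ι → Set E} (hS₀ : ∀ i, IsSegment (d i) (S₀ i))
    (hS₁ : ∀ i, IsSegment (d i) (S₁ i)) (hS₂ : ∀ i, IsSegment (d i) (S₂ i))
    (hdisj₀ : Pairwise (Disjoint on S₀)) (hdisj₁ : Pairwise (Disjoint on S₁))
    (hself : ∀ i, (S₀ i ∩ S₁ i).Nonempty)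
    (hmeet : ∀ i j, (S₀ i ∩ S₁ j).Nonempty → (S₁ i ∩ S₂ j).Nonempty) :
    ∃ κ : ι → Lex (Bool × ℝ), ∀ i j, i ≠ j → (S₀ i ∩ S₁ j).Nonempty → κ j < κ i := by
  choose p hp using hself
  have hline : ∀ i, S₀ i ⊆ line (p i) (d i) ∧ S₁ i ⊆ line (p i) (d i) ∧
      S₂ i ⊆ line (p i) (d i) := by
    intro i
    have h₁ := (hS₁ i).subset_line (hp i).2 (mem_line_self _ _)
    obtain ⟨q, hq₁, hq₂⟩ := hmeet i i ⟨p i, hp i⟩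
    exact ⟨(hS₀ i).subset_line (hp i).1 (mem_line_self _ _), h₁, (hS₂ i).subset_line hq₂ (h₁ hq₁)⟩
  have hord : ∀ {i} {S : Set E}, IsSegment (d i) S → (φ '' S).OrdConnected := fun hS =>
    (hS.convex.linear_image φ).ordConnected
  refine ⟨fun i => meetKey (φ '' S₀ i) (φ '' S₁ i) (φ (p i)), fun i j hij hw₁ => ?_⟩
  obtain ⟨w₁, hw₁i, hw₁j⟩ := hw₁
  obtain ⟨w₂, hw₂i, hw₂j⟩ := hmeet i j ⟨w₁, hw₁i, hw₁j⟩
  -- two distinct common points force the line of `j` into the line of `i`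
  have hL : line (p j) (d j) ⊆ line (p i) (d i) :=
    line_subset_of_mem_of_mem ((hdisj₁ hij).ne_of_mem hw₂i hw₁j).symm ((hline i).1 hw₁i)
      ((hline i).2.1 hw₂i) ((hline j).2.1 hw₁j) ((hline j).2.2 hw₂j)
  have hinj := injOn_line (hφ i) (p i)
  have himage : ∀ {X Y : Set E}, X ⊆ line (p i) (d i) → Y ⊆ line (p i) (d i) → Disjoint X Y →
      Disjoint (φ '' X) (φ '' Y) := fun hX hY hXY =>
    disjoint_image_image fun x hx y hy hxy => hXY.ne_of_mem hx hy (hinj (hX hx) (hY hy) hxy)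
  exact meetKey_lt_meetKey (hord (hS₀ i)) (hord (hS₀ j)) (hord (hS₁ i)) (hord (hS₁ j))
    (himage (hline i).1 ((hline j).1.trans hL) (hdisj₀ hij))
    (himage (hline i).2.1 ((hline j).2.1.trans hL) (hdisj₁ hij))
    ⟨mem_image_of_mem φ (hp i).1, mem_image_of_mem φ (hp i).2⟩
    ⟨mem_image_of_mem φ (hp j).1, mem_image_of_mem φ (hp j).2⟩
    ⟨φ w₁, mem_image_of_mem φ hw₁i, mem_image_of_mem φ hw₁j⟩

theorem exists_sdr_of_homogeneous {α : Type*} {n : ℕ} (F : α → Fin n → Set E) {d : Fin n → E}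
    (hd : ∀ i, d i ≠ 0) (e : Fin (n + 3) ↪ α) (hseg : ∀ a i, IsSegment (d i) (F (e a) i))
    (hdisj : ∀ a, Pairwise (Disjoint on F (e a))) (D : Fin n → Fin n → Prop)
    (hD : ∀ a b, a < b → ∀ i j, Disjoint (F (e a) i) (F (e b) j) ↔ D i j) :
    ∃ (P : Fin n → α) (g : Fin n → Fin n), Injective P ∧
      ∀ j j', j ≠ j' → Disjoint (F (P j) (g j)) (F (P j') (g j')) := by
  suffices ∃ g : Fin n → Fin n, ∀ a b, a < b → D (g a) (g b) by
    obtain ⟨g, hg⟩ := this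
    let P : Fin n → α := fun j => e (Fin.castLE (by omega) j)
    have hP : ∀ a b, a < b → Disjoint (F (P a) (g a)) (F (P b) (g b)) := fun a b hab =>
      (hD _ _ ((Fin.castLE_lt_castLE_iff _).mpr hab) _ _).mpr (hg a b hab)
    exact ⟨P, g, e.injective.comp (Fin.castLE_injective _), fun j j' hjj' =>
      hjj'.lt_or_gt.elim (hP j j') fun h => (hP j' j h).symm⟩
  by_cases hdiag : ∃ i, D i i
  · obtain ⟨i, hi⟩ := hdiag
    exact ⟨fun _ => i, fun _ _ _ => hi⟩
  push Not at hdiag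
  have hmeet : ∀ a b, a < b → ∀ i j, (F (e a) i ∩ F (e b) j).Nonempty ↔ ¬D i j :=
    fun a b hab i j => not_disjoint_iff_nonempty_inter.symm.trans (hD a b hab i j).not
  have h₀₁ : (0 : Fin (n + 3)) < 1 := Fin.zero_lt_one
  have h₁₂ : (1 : Fin (n + 3)) < 2 := by
    simp [Fin.lt_def, Nat.mod_eq_of_lt (by omega : 2 < n + 3)]
  obtain ⟨φ, hφ⟩ := Module.exists_dual_forall_apply_ne_zero (K := ℝ) d hd
  obtain ⟨κ, hκ⟩ := exists_key_forall_meet_lt hφ (hseg 0) (hseg 1) (hseg 2) (hdisj 0) (hdisj 1)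
    (fun i => (hmeet 0 1 h₀₁ i i).mpr (hdiag i))
    (fun i j h => (hmeet 1 2 h₁₂ i j).mpr ((hmeet 0 1 h₀₁ i j).mp h))
  obtain ⟨σ, hσ⟩ := exists_perm_forall_lt_not_rel _ κ hκ
  exact ⟨σ, fun a b hab => not_not.mp fun h => hσ a b hab ((hmeet 0 1 h₀₁ _ _).mpr h)⟩

end Segments

theorem stmt_6_general (n k : ℕ) :
    ∃ N : ℕ, 0 < N ∧
      ∀ U : Finset (ℝ × ℝ), U.card = k → (∀ u ∈ U, u ≠ 0) →
        ∀ F : Fin N → Fin n → Set (ℝ × ℝ),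
          (∀ x b, ∃ u ∈ U, ∃ v : ℝ × ℝ, ∃ s t : ℝ, s ≤ t ∧
              F x b = (fun r : ℝ => r • u + v) '' Set.Icc s t) →
          (∀ x, ∀ b b', b ≠ b' → Disjoint (F x b) (F x b')) →
          ∃ (P : Fin n → Fin N) (g : Fin n → Fin n),
            Function.Injective P ∧
            ∀ j j' : Fin n, j ≠ j' → Disjoint (F (P j) (g j)) (F (P j') (g j')) := by
  classical
  let C := Fin n → Fin n → Prop
  refine ⟨k ^ n * (Fintype.card C + 1) ^ (Fintype.card C * (n + 3)) + 1, Nat.succ_pos _, ?_⟩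
  intro U hU hU₀ F hF hdisj
  choose dir hdirU hseg using hF
  obtain ⟨d, hdU, hfiber⟩ := Finset.exists_lt_card_fiber_of_mul_lt_card_of_maps_to
    (s := Finset.univ) (t := Fintype.piFinset fun _ => U) (f := dir)
    (n := (Fintype.card C + 1) ^ (Fintype.card C * (n + 3)))
    (fun x _ => Fintype.mem_piFinset.mpr (hdirU x)) (by simp [hU])
  obtain ⟨e, D, he, hD⟩ := exists_orderEmbedding_monochromatic (C := C)
    (fun a b i j => Disjoint (F a i) (F b j)) (n + 3) hfiber.le
  have hdir : ∀ a, dir (e a) = d := fun a => (Finset.mem_filter.mp (he a)).2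
  exact exists_sdr_of_homogeneous F (fun i => hU₀ _ (Fintype.mem_piFinset.mp hdU i))
    e.toEmbedding (fun a i => hdir a ▸ hseg (e a) i) (fun a => hdisj (e a)) D
    fun a b hab i j => Iff.of_eq (congrFun (congrFun (hD a b hab) i) j)

/-- Theorem 1.1: for all `n, k` there is `N` such that any `N` families, each of `n`
pairwise disjoint line segments whose directions lie in a fixed set `U` of `k`
direction vectors, have an SDR of size `n`. -/
theorem stmt_6 (n k : ℕ) (hn : 0 < n) (hk : 0 < k) :
    ∃ N : ℕ, 0 < N ∧
      ∀ U : Finset (ℝ × ℝ), U.card = k → (∀ u ∈ U, u ≠ 0) →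
        ∀ F : Fin N → Fin n → Set (ℝ × ℝ),
          (∀ x b, ∃ u ∈ U, ∃ v : ℝ × ℝ, ∃ s t : ℝ, s ≤ t ∧
              F x b = (fun r : ℝ => r • u + v) '' Set.Icc s t) →
          (∀ x, ∀ b b', b ≠ b' → Disjoint (F x b) (F x b')) →
          ∃ (P : Fin n → Fin N) (g : Fin n → Fin n),
            Function.Injective P ∧
            ∀ j j' : Fin n, j ≠ j' → Disjoint (F (P j) (g j)) (F (P j') (g j')) :=
  stmt_6_general n k
end

section
/- Let n, m be positive integers with 2m-2 < n. Define vertical segments I_i = {i}×[1, n-m] for i ∈ ℤ and horizontal segments J_{ij} = [-m+i+1, i-1]×{j}. For i ∈ {1,...,m-1}, let X_i = {I_j : j ∈ [-m+1, -m+i] ∪ [i, m-1]} ∪ {J_{ik} : k ∈ [1, n-m]}, so each X_i consists of m vertical and n-m horizontal pairwise disjoint segments. Then the family consisting of n-m-1 copies of each X_i (so (m-1)(n-m-1) families in total) has no system of disjoint representatives of size n. -/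
/-- The vertical segment `I_i = {i} × [1, n-m]`. -/
def Iseg (n m : ℕ) (i : ℤ) : Set (ℝ × ℝ) :=
  ({(i : ℝ)} : Set ℝ) ×ˢ Set.Icc (1 : ℝ) ((n : ℝ) - (m : ℝ))

/-- The horizontal segment `J_{ij} = [-m+i+1, i-1] × {j}`. -/
def Jseg (m : ℕ) (i j : ℤ) : Set (ℝ × ℝ) :=
  Set.Icc (-(m : ℝ) + (i : ℝ) + 1) ((i : ℝ) - 1) ×ˢ ({(j : ℝ)} : Set ℝ)

/-- The set `X_i` of `m` vertical and `n-m` horizontal segments. -/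
def Xfam (n m : ℕ) (i : ℤ) : Set (Set (ℝ × ℝ)) :=
  {s | ∃ j : ℤ, ((-(m : ℤ) + 1 ≤ j ∧ j ≤ -(m : ℤ) + i) ∨ (i ≤ j ∧ j ≤ (m : ℤ) - 1)) ∧
        s = Iseg n m j} ∪
  {s | ∃ k : ℤ, 1 ≤ k ∧ k ≤ (n : ℤ) - (m : ℤ) ∧ s = Jseg m i k}

lemma mem_Iseg {n m : ℕ} {a : ℤ} {x y : ℝ} :
    (x, y) ∈ Iseg n m a ↔ x = (a : ℝ) ∧ (1 ≤ y ∧ y ≤ (n : ℝ) - m) := by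
  rw [Iseg, Set.mem_prod]
  simp [Set.mem_Icc, eq_comm, and_comm]

lemma mem_Jseg {m : ℕ} {i k : ℤ} {x y : ℝ} :
    (x, y) ∈ Jseg m i k ↔ (-(m : ℝ) + i + 1 ≤ x ∧ x ≤ (i : ℝ) - 1) ∧ y = (k : ℝ) := by
  rw [Jseg, Set.mem_prod]
  simp [Set.mem_Icc, eq_comm]

/-- Example 4.3: for `2m-2 < n`, the family of `n-m-1` copies of each `X_i`,
`i ∈ {1,…,m-1}`, has no SDR of size `n`. -/
theorem stmt_9 (n m : ℕ) (hm : 0 < m) (hmn : 2 * m - 2 < n) :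
    ¬ ∃ (p : Fin n → Fin (m - 1) × Fin (n - m - 1)) (sel : Fin n → Set (ℝ × ℝ)),
        Function.Injective p ∧
        (∀ j, sel j ∈ Xfam n m (((p j).1 : ℕ) + 1)) ∧
        ∀ j j', j ≠ j' → Disjoint (sel j) (sel j') := by
  rintro ⟨p, sel, hp, hmem, hdisj⟩
  by_cases hm1 : m ≤ 1
  · have hn : 0 < n := by omega
    have h0 := (p ⟨0, hn⟩).1.isLt
    omega
  push_neg at hm1
  have hm2 : 2 ≤ m := hm1
  have hnm : m + 1 ≤ n := by omega
  have hn2m : 2 * m - 1 ≤ n := by omega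
  have h1nm : (1 : ℝ) ≤ (n : ℝ) - m := by
    have : (m : ℝ) + 1 ≤ (n : ℝ) := by exact_mod_cast hnm
    linarith
  classical
  -- the (integer) family index of the family from which `sel j` is chosen
  set iof : Fin n → ℤ := fun j => ((((p j).1 : ℕ) : ℤ) + 1) with hiof
  have hiof_bd : ∀ j, 1 ≤ iof j ∧ iof j ≤ (m : ℤ) - 1 := by
    intro j
    have := (p j).1.isLt
    simp only [hiof]
    omega
  -- choose, for each j, whether `sel j` is vertical or horizontal, and its parameter
  have main : ∀ j : Fin n, ∃ (bb : Bool) (v : ℤ),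
      (bb = true → ((-(m : ℤ) + 1 ≤ v ∧ v ≤ -(m : ℤ) + iof j) ∨
          (iof j ≤ v ∧ v ≤ (m : ℤ) - 1)) ∧ sel j = Iseg n m v) ∧
      (bb = false → (1 ≤ v ∧ v ≤ (n : ℤ) - (m : ℤ)) ∧ sel j = Jseg m (iof j) v) := by
    intro j
    rcases hmem j with ⟨a, ha, hs⟩ | ⟨k, hk1, hk2, hs⟩
    · exact ⟨true, a, fun _ => ⟨ha, hs⟩, fun h => by simp at h⟩
    · exact ⟨false, k, fun h => by simp at h, fun _ => ⟨⟨hk1, hk2⟩, hs⟩⟩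
  choose bb v hbt hbf using main
  set V : Finset (Fin n) := Finset.univ.filter (fun j => bb j = true) with hVdef
  set H : Finset (Fin n) := Finset.univ.filter (fun j => ¬ bb j = true) with hHdef
  have hVmem : ∀ j ∈ V, bb j = true := by
    intro j hj; simpa [hVdef] using hj
  have hHmem : ∀ j ∈ H, bb j = false := by
    intro j hj; simpa [hHdef] using hj
  have hVH : V.card + H.card = n := by
    rw [hVdef, hHdef, Finset.card_filter_add_card_filter_not, Finset.card_univ,
      Fintype.card_fin]
  -- vertical parameters are injective
  have injV : Set.InjOn v V := by
    intro j hj j' hj' hvv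
    by_contra hne
    have h1 := (hbt j (hVmem j hj)).2
    have h2 := (hbt j' (hVmem j' hj')).2
    have hd := hdisj j j' hne
    rw [h1, h2, ← hvv] at hd
    have hq : ((v j : ℝ), (1 : ℝ)) ∈ Iseg n m (v j) := mem_Iseg.mpr ⟨rfl, le_rfl, h1nm⟩
    exact (Set.disjoint_left.mp hd hq) hq
  -- horizontal heights are injective
  have injH : Set.InjOn v H := by
    intro j hj j' hj' hvv
    by_contra hne
    have h1 := hbf j (hHmem j hj)
    have h2 := hbf j' (hHmem j' hj')
    have hd := hdisj j j' hne
    rw [h1.2, h2.2] at hd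
    have hb := hiof_bd j
    have hb' := hiof_bd j'
    set x0 : ℤ := -(m : ℤ) + max (iof j) (iof j') + 1 with hx0
    have c1 : -(m : ℤ) + iof j + 1 ≤ x0 ∧ x0 ≤ iof j - 1 := by omega
    have c2 : -(m : ℤ) + iof j' + 1 ≤ x0 ∧ x0 ≤ iof j' - 1 := by omega
    have hq1 : ((x0 : ℝ), (v j : ℝ)) ∈ Jseg m (iof j) (v j) := by
      refine mem_Jseg.mpr ⟨⟨?_, ?_⟩, rfl⟩
      · exact_mod_cast c1.1
      · exact_mod_cast c1.2
    have hq2 : ((x0 : ℝ), (v j : ℝ)) ∈ Jseg m (iof j') (v j') := by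
      refine mem_Jseg.mpr ⟨⟨?_, ?_⟩, by exact_mod_cast hvv⟩
      · exact_mod_cast c2.1
      · exact_mod_cast c2.2
    exact (Set.disjoint_left.mp hd hq1) hq2
  -- a chosen vertical avoids the hole of any chosen horizontal's family
  have avoid : ∀ j ∈ H, ∀ j' ∈ V,
      ¬ (-(m : ℤ) + iof j + 1 ≤ v j' ∧ v j' ≤ iof j - 1) := by
    rintro j hj j' hj' ⟨h1, h2⟩
    have hbj := hHmem j hj
    have hbj' := hVmem j' hj'
    have hne : j ≠ j' := by rintro rfl; rw [hbj'] at hbj; simp at hbj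
    have hJ := hbf j hbj
    have hI := hbt j' hbj'
    have hd := hdisj j j' hne
    rw [hJ.2, hI.2] at hd
    have hq1 : ((v j' : ℝ), (v j : ℝ)) ∈ Jseg m (iof j) (v j) := by
      refine mem_Jseg.mpr ⟨⟨?_, ?_⟩, rfl⟩
      · exact_mod_cast h1
      · exact_mod_cast h2
    have hq2 : ((v j' : ℝ), (v j : ℝ)) ∈ Iseg n m (v j') := by
      refine mem_Iseg.mpr ⟨rfl, ?_, ?_⟩
      · exact_mod_cast hJ.1.1
      · exact_mod_cast hJ.1.2
    exact (Set.disjoint_left.mp hd hq1) hq2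
  -- vertical parameters lie in [-m+1, m-1] \ {0}
  have hvV : ∀ j ∈ V, (-(m : ℤ) + 1 ≤ v j ∧ v j ≤ (m : ℤ) - 1) ∧ v j ≠ 0 := by
    intro j hj
    have h := (hbt j (hVmem j hj)).1
    have hb := hiof_bd j
    omega
  -- |H| ≤ n - m  (as integers: heights are distinct in [1, n-m])
  have hHcard : H.card ≤ n - m := by
    have : H.card ≤ (Finset.Icc (1 : ℤ) ((n : ℤ) - m)).card := by
      apply Finset.card_le_card_of_injOn v
      · intro j hj
        have h := (hbf j (hHmem j hj)).1
        simp [Finset.mem_Icc]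
        omega
      · exact injH
    rw [Int.card_Icc] at this
    omega
  rcases Finset.eq_empty_or_nonempty H with hHe | ⟨j0, hj0⟩
  · -- no horizontals: at most 2m-2 verticals, but we need n ≥ 2m-1
    have hVcard : V.card ≤ 2 * m - 2 := by
      have : V.card ≤ ((Finset.Icc (-(m : ℤ) + 1) ((m : ℤ) - 1)).erase 0).card := by
        apply Finset.card_le_card_of_injOn v
        · intro j hj
          have h := hvV j hj
          simp [Finset.mem_Icc, Finset.mem_erase]
          omega
        · exact injV
      rw [Finset.card_erase_of_mem (by simp [Finset.mem_Icc]; omega), Int.card_Icc] at this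
      omega
    rw [hHe] at hVH
    simp at hVH
    omega
  · by_cases hsame : ∃ j1 ∈ H, iof j1 ≠ iof j0
    · -- two different horizontal families: verticals avoid an interval of ≥ m values
      obtain ⟨j1, hj1, hne01⟩ := hsame
      set lo : ℤ := -(m : ℤ) + min (iof j0) (iof j1) + 1 with hlo
      set hi : ℤ := max (iof j0) (iof j1) - 1 with hhi
      have hb0 := hiof_bd j0
      have hb1 := hiof_bd j1
      have hVcard : V.card ≤ m - 1 := by
        have hsub : Finset.Icc lo hi ⊆ Finset.Icc (-(m : ℤ) + 1) ((m : ℤ) - 1) := by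
          intro x hx
          simp [Finset.mem_Icc] at hx ⊢
          omega
        have : V.card ≤ ((Finset.Icc (-(m : ℤ) + 1) ((m : ℤ) - 1)) \ Finset.Icc lo hi).card := by
          apply Finset.card_le_card_of_injOn v
          · intro j hj
            have h := hvV j hj
            have ha0 := avoid j0 hj0 j hj
            have ha1 := avoid j1 hj1 j hj
            simp [Finset.mem_Icc, Finset.mem_sdiff]
            omega
          · exact injV
        rw [Finset.card_sdiff_of_subset hsub, Int.card_Icc, Int.card_Icc] at this
        omega
      omega
    · -- all horizontals from the same family index: use copies pigeonhole
      push_neg at hsame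
      have hb0 := hiof_bd j0
      have hVcard : V.card ≤ m := by
        set lo : ℤ := -(m : ℤ) + iof j0 + 1 with hlo
        set hi : ℤ := iof j0 - 1 with hhi
        have hsub : Finset.Icc lo hi ⊆ Finset.Icc (-(m : ℤ) + 1) ((m : ℤ) - 1) := by
          intro x hx
          simp [Finset.mem_Icc] at hx ⊢
          omega
        have : V.card ≤ ((Finset.Icc (-(m : ℤ) + 1) ((m : ℤ) - 1)) \ Finset.Icc lo hi).card := by
          apply Finset.card_le_card_of_injOn v
          · intro j hj
            have h := hvV j hj
            have ha0 := avoid j0 hj0 j hj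
            simp [Finset.mem_Icc, Finset.mem_sdiff]
            omega
          · exact injV
        rw [Finset.card_sdiff_of_subset hsub, Int.card_Icc, Int.card_Icc] at this
        omega
      have hHcard2 : H.card ≤ n - m - 1 := by
        have : H.card ≤ (Finset.univ : Finset (Fin (n - m - 1))).card := by
          apply Finset.card_le_card_of_injOn (fun j => (p j).2)
          · intro j hj; exact Finset.mem_univ _
          · intro j hj j' hj' hpp
            have h0 : iof j = iof j' := by rw [hsame j hj, hsame j' hj']
            have h1 : (p j).1 = (p j').1 := by
              have : (((p j).1 : ℕ) : ℤ) = (((p j').1 : ℕ) : ℤ) := by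
                simp only [hiof] at h0; omega
              exact Fin.ext (by exact_mod_cast this)
            exact hp (Prod.ext h1 hpp)
        simpa using this
      omega
end

section
/- For every k ≥ 1 there exists a family of 4(k+1) axis-parallel closed boxes (rectangles) in the plane whose intersection graph is isomorphic to the k-th power of the cycle C_{4(k+1)}. -/
private def coords (k a p : ℕ) : ℤ × ℤ × ℤ × ℤ :=
  if a = 0 then (-(k+1 : ℤ), (p : ℤ), (p : ℤ)+1, (k:ℤ)+1)
  else if a = 1 then ((p:ℤ)+1, (k:ℤ)+1, -(p:ℤ), (k:ℤ)+1)
  else if a = 2 then (-(p:ℤ), (k:ℤ)+1, -(k+1:ℤ), -((p:ℤ)+1))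
  else (-(k+1:ℤ), -((p:ℤ)+1), -(k+1:ℤ), (p:ℤ))

private def cf (k i : ℕ) : ℤ × ℤ × ℤ × ℤ := coords k (i / (k+1)) (i % (k+1))

private lemma cf_le (k i : ℕ) :
    (cf k i).1 ≤ (cf k i).2.1 ∧ (cf k i).2.2.1 ≤ (cf k i).2.2.2 := by
  have hp : i % (k+1) < k + 1 := Nat.mod_lt _ (by omega)
  unfold cf coords
  split_ifs <;> dsimp only <;> constructor <;> omega

private lemma mod_two (x n : ℕ) (hn : 0 < n) (h : x < 2 * n) :
    x % n = if x < n then x else x - n := by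
  split
  · exact Nat.mod_eq_of_lt ‹_›
  · rw [Nat.mod_eq_sub_mod (by omega)]
    exact Nat.mod_eq_of_lt (by omega)

private lemma exists_e (k i j : ℕ) (hi : i < 4*(k+1)) (hj : j < 4*(k+1)) (hne : i ≠ j) :
    (∃ e : ℕ, 1 ≤ e ∧ e ≤ k ∧ ((i + e) % (4*(k+1)) = j ∨ (j + e) % (4*(k+1)) = i)) ↔
    ((4*(k+1) + j - i) % (4*(k+1)) ≤ k ∨ (4*(k+1) + i - j) % (4*(k+1)) ≤ k) := by
  have h1 := mod_two (4*(k+1) + j - i) (4*(k+1)) (by omega) (by omega)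
  have h2 := mod_two (4*(k+1) + i - j) (4*(k+1)) (by omega) (by omega)
  constructor
  · rintro ⟨e, he1, he2, h | h⟩
    · rw [mod_two (i+e) (4*(k+1)) (by omega) (by omega)] at h
      rw [h1, h2]; split_ifs at h ⊢ <;> omega
    · rw [mod_two (j+e) (4*(k+1)) (by omega) (by omega)] at h
      rw [h1, h2]; split_ifs at h ⊢ <;> omega
  · rintro (h | h)
    · refine ⟨(4*(k+1) + j - i) % (4*(k+1)), ?_, h, Or.inl ?_⟩
      · rw [h1]; split_ifs <;> omega
      · rw [h1]; split_ifs with hc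
        · have := mod_two (i + (4*(k+1) + j - i)) (4*(k+1)) (by omega) (by omega)
          rw [this]; split_ifs <;> omega
        · have := mod_two (i + (4*(k+1) + j - i - 4*(k+1))) (4*(k+1)) (by omega) (by omega)
          rw [this]; split_ifs <;> omega
    · refine ⟨(4*(k+1) + i - j) % (4*(k+1)), ?_, h, Or.inr ?_⟩
      · rw [h2]; split_ifs <;> omega
      · rw [h2]; split_ifs with hc
        · have := mod_two (j + (4*(k+1) + i - j)) (4*(k+1)) (by omega) (by omega)
          rw [this]; split_ifs <;> omega
        · have := mod_two (j + (4*(k+1) + i - j - 4*(k+1))) (4*(k+1)) (by omega) (by omega)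
          rw [this]; split_ifs <;> omega

set_option maxHeartbeats 1000000 in
private lemma geom (k a p b q i j : ℕ) (hk : 1 ≤ k) (ha : a < 4) (hb : b < 4)
    (hp : p < k+1) (hq : q < k+1) (hi : i < 4*(k+1)) (hj : j < 4*(k+1))
    (hpa : a*(k+1)+p = i) (hqb : b*(k+1)+q = j) (hne : i ≠ j) :
    ((coords k a p).1 ≤ (coords k b q).2.1 ∧ (coords k b q).1 ≤ (coords k a p).2.1 ∧
     (coords k a p).2.2.1 ≤ (coords k b q).2.2.2 ∧ (coords k b q).2.2.1 ≤ (coords k a p).2.2.2) ↔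
    ((4*(k+1) + j - i) % (4*(k+1)) ≤ k ∨ (4*(k+1) + i - j) % (4*(k+1)) ≤ k) := by
  have h1 := mod_two (4*(k+1) + j - i) (4*(k+1)) (by omega) (by omega)
  have h2 := mod_two (4*(k+1) + i - j) (4*(k+1)) (by omega) (by omega)
  rw [h1, h2]
  interval_cases a <;> interval_cases b <;>
    simp only [coords, reduceIte] <;> norm_num <;> split_ifs <;> omega

private lemma geom' (k i j : ℕ) (hk : 1 ≤ k) (hi : i < 4*(k+1)) (hj : j < 4*(k+1))
    (hne : i ≠ j) :
    ((cf k i).1 ≤ (cf k j).2.1 ∧ (cf k j).1 ≤ (cf k i).2.1 ∧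
     (cf k i).2.2.1 ≤ (cf k j).2.2.2 ∧ (cf k j).2.2.1 ≤ (cf k i).2.2.2) ↔
    ((4*(k+1) + j - i) % (4*(k+1)) ≤ k ∨ (4*(k+1) + i - j) % (4*(k+1)) ≤ k) :=
  geom k (i/(k+1)) (i%(k+1)) (j/(k+1)) (j%(k+1)) i j hk
    (Nat.div_lt_of_lt_mul (by omega)) (Nat.div_lt_of_lt_mul (by omega))
    (Nat.mod_lt _ (by omega)) (Nat.mod_lt _ (by omega)) hi hj
    (by rw [Nat.mul_comm]; exact Nat.div_add_mod _ _)
    (by rw [Nat.mul_comm]; exact Nat.div_add_mod _ _) hne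

/-- For every `k ≥ 1` there is a family of `4(k+1)` axis-parallel closed boxes in the
plane whose intersection graph is the `k`-th power of the cycle `C_{4(k+1)}`. -/
theorem stmt_13 (k : ℕ) (hk : 1 ≤ k) :
    ∃ B : Fin (4 * (k + 1)) → Set (ℝ × ℝ),
      (∀ i, ∃ a b c d : ℝ, a ≤ b ∧ c ≤ d ∧ B i = Set.Icc a b ×ˢ Set.Icc c d) ∧
      ∀ i j : Fin (4 * (k + 1)), i ≠ j →
        ((B i ∩ B j).Nonempty ↔
          ∃ e : ℕ, 1 ≤ e ∧ e ≤ k ∧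
            (((i : ℕ) + e) % (4 * (k + 1)) = (j : ℕ) ∨
             ((j : ℕ) + e) % (4 * (k + 1)) = (i : ℕ))) := by
  refine ⟨fun i => Set.Icc (((cf k i).1 : ℝ)) (((cf k i).2.1 : ℝ)) ×ˢ
      Set.Icc (((cf k i).2.2.1 : ℝ)) (((cf k i).2.2.2 : ℝ)), ?_, ?_⟩
  · intro i
    have h := cf_le k i
    exact ⟨_, _, _, _, by exact_mod_cast h.1, by exact_mod_cast h.2, rfl⟩
  · intro i j hne
    have hne' : (i:ℕ) ≠ (j:ℕ) := fun h => hne (Fin.ext h)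
    have hi := i.isLt
    have hj := j.isLt
    have hbi := cf_le k i
    have hbj := cf_le k j
    have hN : ((Set.Icc (((cf k i).1 : ℝ)) (((cf k i).2.1 : ℝ)) ×ˢ
        Set.Icc (((cf k i).2.2.1 : ℝ)) (((cf k i).2.2.2 : ℝ))) ∩
        (Set.Icc (((cf k j).1 : ℝ)) (((cf k j).2.1 : ℝ)) ×ˢ
        Set.Icc (((cf k j).2.2.1 : ℝ)) (((cf k j).2.2.2 : ℝ)))).Nonempty ↔
        ((cf k i).1 ≤ (cf k j).2.1 ∧ (cf k j).1 ≤ (cf k i).2.1 ∧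
         (cf k i).2.2.1 ≤ (cf k j).2.2.2 ∧ (cf k j).2.2.1 ≤ (cf k i).2.2.2) := by
      rw [Set.prod_inter_prod, Set.prod_nonempty_iff, Set.Icc_inter_Icc, Set.Icc_inter_Icc,
        Set.nonempty_Icc, Set.nonempty_Icc]
      simp only [sup_le_iff, le_inf_iff]
      constructor
      · rintro ⟨⟨⟨-, h1⟩, h2, -⟩, ⟨-, h3⟩, h4, -⟩
        refine ⟨?_, ?_, ?_, ?_⟩ <;>
          first
            | exact_mod_cast h1 | exact_mod_cast h2 | exact_mod_cast h3 | exact_mod_cast h4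
      · rintro ⟨h1, h2, h3, h4⟩
        refine ⟨⟨⟨?_, ?_⟩, ?_, ?_⟩, ⟨?_, ?_⟩, ?_, ?_⟩ <;>
          first
            | exact_mod_cast hbi.1 | exact_mod_cast hbi.2
            | exact_mod_cast hbj.1 | exact_mod_cast hbj.2
            | exact_mod_cast h1 | exact_mod_cast h2
            | exact_mod_cast h3 | exact_mod_cast h4
    rw [hN, exists_e k i j hi hj hne']
    exact geom' k i j hk hi hj hne'
end

section
/- Let n ≥ 2 and q ≥ 2, and let G be the (q-1)-th power of the cycle on nq vertices. Then every independent set of size n in G is of the form {i, i+q, ..., i+(n-1)q} for some i ∈ ℤ/qℤ, and the family consisting of n-1 copies of each of these q independent sets (a family of (n-1)q independent sets of size n) admits no rainbow independent set of size n. -/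
open Finset

lemma stmt_14_key (n q : ℕ) (hn : 2 ≤ n) (hq : 2 ≤ q) (S : Finset (ZMod (n * q)))
    (hcard : S.card = n)
    (hind : ∀ a ∈ S, ∀ b ∈ S, a ≠ b →
      ∀ e : ℕ, 1 ≤ e → e ≤ q - 1 → b ≠ a + (e : ZMod (n * q)) ∧ a ≠ b + (e : ZMod (n * q))) :
    ∃ i : ZMod (n * q),
      S = Finset.image (fun l : Fin n => i + (((l : ℕ) * q : ℕ) : ZMod (n * q))) Finset.univ := by
  have hN : 0 < n * q := by positivity
  haveI : NeZero (n * q) := ⟨hN.ne'⟩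
  have hqle : q ≤ n * q := Nat.le_mul_of_pos_left q (by omega)
  have hqN : q + (n - 1) * q = n * q := by
    rw [Nat.sub_one_mul]; omega
  obtain ⟨v0, hv0⟩ : ∃ v0, v0 ∈ S := Finset.card_pos.mp (by omega) |>.exists_mem
  -- difference bound
  have hdiff : ∀ a ∈ S, ∀ b ∈ S, a ≠ b → q ≤ (b - a).val ∧ (b - a).val ≤ n * q - q := by
    intro a ha b hb hab
    have hd0 : (b - a).val ≠ 0 := by
      simp only [ne_eq, ZMod.val_eq_zero, sub_eq_zero]
      exact fun h => hab h.symm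
    have hdlt : (b - a).val < n * q := ZMod.val_lt _
    have hcast : (((b - a).val : ℕ) : ZMod (n * q)) = b - a := ZMod.natCast_rightInverse _
    constructor
    · by_contra hlt
      push_neg at hlt
      exact (hind a ha b hb hab (b - a).val (by omega) (by omega)).1
        (by rw [hcast]; ring) |>.elim
    · by_contra hgt
      push_neg at hgt
      have hba0 : b - a ≠ 0 := fun h => hab (by rwa [sub_eq_zero, eq_comm] at h)
      have hval : (a - b).val = n * q - (b - a).val := by
        have h1 : a - b = -(b - a) := by ring
        rw [h1, ZMod.neg_val, if_neg hba0]
      have hcast2 : ((n * q - (b - a).val : ℕ) : ZMod (n * q)) = a - b := by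
        rw [← hval]; exact ZMod.natCast_rightInverse _
      exact (hind a ha b hb hab (n * q - (b - a).val) (by omega) (by omega)).2
        (by rw [hcast2]; ring) |>.elim
  -- shift to ℕ
  have hsubinj : Set.InjOn (fun x : ZMod (n * q) => (x - v0).val) S := by
    intro x _ y _ hxy
    have := ZMod.val_injective (n * q) hxy
    exact sub_left_injective this
  set T : Finset ℕ := S.image (fun x => (x - v0).val) with hT
  have hTcard : T.card = n := by rw [hT, Finset.card_image_of_injOn hsubinj, hcard]
  have h0T : (0 : ℕ) ∈ T := Finset.mem_image.mpr ⟨v0, hv0, by simp⟩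
  have hgap : ∀ u ∈ T, ∀ w ∈ T, u < w → u + q ≤ w ∧ w ≤ u + (n * q - q) := by
    intro u hu w hw huw
    obtain ⟨a, ha, rfl⟩ := Finset.mem_image.mp hu
    obtain ⟨b, hb, rfl⟩ := Finset.mem_image.mp hw
    have hab : a ≠ b := by
      rintro rfl; exact absurd rfl huw.ne
    have hwlt : (b - v0).val < n * q := ZMod.val_lt _
    have hkey : (b - a).val = (b - v0).val - (a - v0).val := by
      have h1 : b - a = (((b - v0).val - (a - v0).val : ℕ) : ZMod (n * q)) := by
        rw [Nat.cast_sub huw.le, ZMod.natCast_rightInverse, ZMod.natCast_rightInverse]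
        ring
      rw [h1, ZMod.val_cast_of_lt (by omega)]
    have := hdiff a ha b hb hab
    omega
  have hmax : ∀ x ∈ T, x ≤ (n - 1) * q := by
    intro x hx
    rcases Nat.eq_zero_or_pos x with rfl | hxpos
    · exact Nat.zero_le _
    · have := hgap 0 h0T x hx hxpos
      omega
  have hchain : ∀ j k : ℕ, ∀ h : k + j < n, ∀ hk : k < n,
      T.orderEmbOfFin hTcard ⟨k, hk⟩ + j * q ≤ T.orderEmbOfFin hTcard ⟨k + j, h⟩ := by
    intro j
    induction j with
    | zero => intro k h hk; simp
    | succ j ih =>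
      intro k h hk
      have h1 : k + j < n := by omega
      have h2' : k + j + 1 < n := by omega
      have h2 := ih k h1 hk
      have hlt : T.orderEmbOfFin hTcard ⟨k + j, h1⟩ <
          T.orderEmbOfFin hTcard ⟨k + j + 1, h2'⟩ :=
        (T.orderEmbOfFin hTcard).strictMono (by exact Fin.mk_lt_mk.mpr (by omega))
      have h3 := (hgap _ (T.orderEmbOfFin_mem hTcard ⟨k + j, h1⟩) _
        (T.orderEmbOfFin_mem hTcard ⟨k + j + 1, h2'⟩) hlt).1
      have hcast : (⟨k + (j + 1), h⟩ : Fin n) = ⟨k + j + 1, h2'⟩ := by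
        exact Fin.mk_eq_mk.mpr (by omega)
      rw [hcast, Nat.succ_mul]
      omega
  have heval : ∀ k : ℕ, ∀ hk : k < n, T.orderEmbOfFin hTcard ⟨k, hk⟩ = k * q := by
    intro k hk
    have h0 : (0 : ℕ) < n := by omega
    have hlow := hchain k 0 (by omega) h0
    simp only [Nat.zero_add] at hlow
    have hhigh := hchain (n - 1 - k) k (by omega) hk
    have hmaxv := hmax _ (T.orderEmbOfFin_mem hTcard ⟨k + (n - 1 - k), by omega⟩)
    have hsplit : (n - 1 - k) * q + k * q = (n - 1) * q := by
      rw [← Nat.add_mul]; congr 1; omega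
    have h00 := Nat.zero_le (T.orderEmbOfFin hTcard ⟨0, h0⟩)
    omega
  have heval' : ∀ k : Fin n, T.orderEmbOfFin hTcard k = (k : ℕ) * q := by
    intro k
    have := heval k.1 k.2
    rwa [Fin.eta] at this
  have hTeq : T = Finset.image (fun k : Fin n => (k : ℕ) * q) Finset.univ := by
    ext x
    simp only [Finset.mem_image, Finset.mem_univ, true_and]
    constructor
    · intro hx
      have : x ∈ Set.range (T.orderEmbOfFin hTcard) := by
        rw [Finset.range_orderEmbOfFin]; exact hx
      obtain ⟨k, rfl⟩ := this
      exact ⟨k, (heval' k).symm⟩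
    · rintro ⟨k, rfl⟩
      have := T.orderEmbOfFin_mem hTcard k
      rwa [heval' k] at this
  refine ⟨v0, ?_⟩
  ext x
  simp only [Finset.mem_image, Finset.mem_univ, true_and]
  constructor
  · intro hx
    have hxT : (x - v0).val ∈ T := Finset.mem_image.mpr ⟨x, hx, rfl⟩
    rw [hTeq] at hxT
    simp only [Finset.mem_image, Finset.mem_univ, true_and] at hxT
    obtain ⟨k, hkx⟩ := hxT
    refine ⟨k, ?_⟩
    have : (((x - v0).val : ℕ) : ZMod (n * q)) = x - v0 := ZMod.natCast_rightInverse _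
    rw [hkx, this]; ring
  · rintro ⟨k, rfl⟩
    have hkT : (k : ℕ) * q ∈ T := by
      rw [hTeq]; exact Finset.mem_image.mpr ⟨k, Finset.mem_univ _, rfl⟩
    obtain ⟨a, ha, hav⟩ := Finset.mem_image.mp hkT
    have : a = v0 + (((k : ℕ) * q : ℕ) : ZMod (n * q)) := by
      rw [← hav, ZMod.natCast_rightInverse]; ring
    rwa [← this]

/-- In the `(q-1)`-th power of the cycle on `nq` vertices, every independent set of size
`n` is of the form `{i, i+q, …, i+(n-1)q}`, and the family consisting of `n-1` copies of
each of the `q` such sets `B_0,…,B_{q-1}` has no rainbow independent set of size `n`. -/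
theorem stmt_14 (n q : ℕ) (hn : 2 ≤ n) (hq : 2 ≤ q) :
    (∀ S : Finset (ZMod (n * q)), S.card = n →
        (∀ a ∈ S, ∀ b ∈ S, a ≠ b →
          ∀ e : ℕ, 1 ≤ e → e ≤ q - 1 → b ≠ a + (e : ZMod (n * q)) ∧ a ≠ b + (e : ZMod (n * q))) →
        ∃ i : ZMod (n * q),
          S = Finset.image (fun l : Fin n => i + (((l : ℕ) * q : ℕ) : ZMod (n * q)))
                Finset.univ) ∧
    ¬ ∃ (p : Fin n → Fin (n - 1) × Fin q) (v : Fin n → ZMod (n * q)),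
        Function.Injective p ∧
        (∀ j, v j ∈ Finset.image
            (fun l : Fin n => (((((p j).2 : ℕ) + (l : ℕ) * q : ℕ)) : ZMod (n * q)))
            Finset.univ) ∧
        (∀ a b : Fin n, a ≠ b → v a ≠ v b ∧
          ∀ e : ℕ, 1 ≤ e → e ≤ q - 1 →
            v b ≠ v a + (e : ZMod (n * q)) ∧ v a ≠ v b + (e : ZMod (n * q))) := by
  constructor
  · intro S hcard hind
    exact stmt_14_key n q hn hq S hcard hind
  · rintro ⟨p, v, hp, hmem, hind⟩
    have hvinj : Function.Injective v := by
      intro a b hab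
      by_contra hne
      exact (hind a b hne).1 hab
    set S : Finset (ZMod (n * q)) := Finset.image v Finset.univ with hS
    have hcard : S.card = n := by
      rw [hS, Finset.card_image_of_injective _ hvinj, Finset.card_univ, Fintype.card_fin]
    have hSind : ∀ a ∈ S, ∀ b ∈ S, a ≠ b →
        ∀ e : ℕ, 1 ≤ e → e ≤ q - 1 →
          b ≠ a + (e : ZMod (n * q)) ∧ a ≠ b + (e : ZMod (n * q)) := by
      intro a ha b hb hab e he1 he2
      obtain ⟨j, _, rfl⟩ := Finset.mem_image.mp ha
      obtain ⟨j', _, rfl⟩ := Finset.mem_image.mp hb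
      have hjj' : j ≠ j' := fun h => hab (by rw [h])
      exact (hind j j' hjj').2 e he1 he2
    obtain ⟨i, hSeq⟩ := stmt_14_key n q hn hq S hcard hSind
    -- cast to ZMod q
    have hdvd : q ∣ n * q := ⟨n, Nat.mul_comm n q⟩
    set φ : ZMod (n * q) →+* ZMod q := ZMod.castHom hdvd (ZMod q) with hφ
    have hφS : ∀ x ∈ S, φ x = φ i := by
      intro x hx
      rw [hSeq] at hx
      obtain ⟨l, _, rfl⟩ := Finset.mem_image.mp hx
      simp [map_add, map_natCast, Nat.cast_mul, ZMod.natCast_self]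
    have hc : ∀ j, (((p j).2 : ℕ) : ZMod q) = φ i := by
      intro j
      obtain ⟨l, _, hl⟩ := Finset.mem_image.mp (hmem j)
      have hvS : v j ∈ S := Finset.mem_image.mpr ⟨j, Finset.mem_univ _, rfl⟩
      have := hφS (v j) hvS
      rw [← hl] at this
      rw [← this]
      simp [map_natCast, Nat.cast_add, Nat.cast_mul, ZMod.natCast_self]
    have hsnd : ∀ j j' : Fin n, (p j).2 = (p j').2 := by
      intro j j'
      have h1 : (((p j).2 : ℕ) : ZMod q) = (((p j').2 : ℕ) : ZMod q) := by
        rw [hc j, hc j']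
      haveI : NeZero q := ⟨by omega⟩
      have h2 : ((p j).2 : ℕ) = ((p j').2 : ℕ) := by
        have := congrArg ZMod.val h1
        rwa [ZMod.val_cast_of_lt ((p j).2.2), ZMod.val_cast_of_lt ((p j').2.2)] at this
      exact Fin.ext h2
    have hginj : Function.Injective (fun j => (p j).1) := by
      intro a b hab
      apply hp
      exact Prod.ext hab (hsnd a b)
    have := Fintype.card_le_of_injective _ hginj
    simp only [Fintype.card_fin] at this
    omega
end

section
/- Let n ≥ 2 and q ≥ 2. There exist q sets B_0,...,B_{q-1} in the plane, each consisting of n pairwise disjoint simple curve segments (where curves from different B_i may cross each other arbitrarily many times), such that the family consisting of n-1 copies of each B_i (a family of (n-1)q sets, each of n disjoint curve segments) has no system of disjoint representatives of size n. Consequently, if the number of crossings between two simple curves is unbounded, f_J(n) is unbounded. -/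
/-- A simple curve in the plane: an injective continuous map from a closed interval. -/
structure SimpleCurve where
  a : ℝ
  b : ℝ
  hab : a ≤ b
  f : ℝ → ℝ × ℝ
  cont : ContinuousOn f (Set.Icc a b)
  inj : Set.InjOn f (Set.Icc a b)

/-- The image of a simple curve. -/
def SimpleCurve.image (c : SimpleCurve) : Set (ℝ × ℝ) := c.f '' Set.Icc c.a c.b

/-- Remark 3.2: for `n, q ≥ 2` there exist `q` sets `B_0,…,B_{q-1}`, each of `n`
pairwise disjoint simple-curve segments, such that the family of `n-1` copies of each
`B_i` has no SDR of size `n`. -/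
theorem stmt_15 (n q : ℕ) (hn : 2 ≤ n) (hq : 2 ≤ q) :
    ∃ B : Fin q → Fin n → Set (ℝ × ℝ),
      (∀ i j, ∃ c : SimpleCurve, B i j = c.image) ∧
      (∀ i, ∀ j j', j ≠ j' → Disjoint (B i j) (B i j')) ∧
      ¬ ∃ (p : Fin n → Fin (n - 1) × Fin q) (g : Fin n → Fin n),
          Function.Injective p ∧
          ∀ j j' : Fin n, j ≠ j' →
            Disjoint (B (p j).2 (g j)) (B (p j').2 (g j')) := by
  have hn0 : (0:ℝ) ≤ (n:ℝ) := by positivity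
  -- family i, segment j: the line y = i x + j restricted to x ∈ [-n, n]
  set B : Fin q → Fin n → Set (ℝ × ℝ) :=
    fun i j => (fun x : ℝ => (x, (i.val : ℝ) * x + (j.val : ℝ))) '' Set.Icc (-(n:ℝ)) (n:ℝ)
    with hB
  -- key: segments from different families always intersect
  have hcross : ∀ (i i' : Fin q) (j j' : Fin n), i ≠ i' →
      ¬ Disjoint (B i j) (B i' j') := by
    intro i i' j j' hii'
    have hne : (i.val : ℝ) ≠ (i'.val : ℝ) := by
      exact_mod_cast fun h => hii' (Fin.ext h)
    have hd : (i.val : ℝ) - (i'.val : ℝ) ≠ 0 := sub_ne_zero.mpr hne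
    set s : ℝ := ((j'.val : ℝ) - (j.val : ℝ)) / ((i.val : ℝ) - (i'.val : ℝ)) with hs
    have h1 : (1:ℝ) ≤ |(i.val : ℝ) - (i'.val : ℝ)| := by
      have : (1:ℤ) ≤ |(i.val : ℤ) - (i'.val : ℤ)| := by
        refine Int.one_le_abs (sub_ne_zero.mpr ?_)
        exact_mod_cast fun h => hii' (Fin.ext h)
      calc (1:ℝ) ≤ (|(i.val : ℤ) - (i'.val : ℤ)| : ℤ) := by exact_mod_cast this
        _ = |(i.val : ℝ) - (i'.val : ℝ)| := by push_cast [abs_sub_comm]; rw [abs_sub_comm]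
    have hjb : |(j'.val : ℝ) - (j.val : ℝ)| ≤ (n:ℝ) := by
      have h1 : (j.val : ℝ) < n := by exact_mod_cast j.isLt
      have h2 : (j'.val : ℝ) < n := by exact_mod_cast j'.isLt
      have h3 : (0:ℝ) ≤ (j.val : ℝ) := by positivity
      have h4 : (0:ℝ) ≤ (j'.val : ℝ) := by positivity
      rw [abs_le]; constructor <;> linarith
    have hmem : s ∈ Set.Icc (-(n:ℝ)) (n:ℝ) := by
      have : |s| ≤ (n:ℝ) := by
        rw [hs, abs_div]
        calc |(j'.val : ℝ) - (j.val : ℝ)| / |(i.val : ℝ) - (i'.val : ℝ)|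
            ≤ |(j'.val : ℝ) - (j.val : ℝ)| := div_le_self (abs_nonneg _) h1
          _ ≤ (n:ℝ) := hjb
      exact abs_le.mp this
    refine Set.not_disjoint_iff.mpr ⟨(s, (i.val : ℝ) * s + (j.val : ℝ)), ⟨s, hmem, rfl⟩, ⟨s, hmem, ?_⟩⟩
    have : (i'.val : ℝ) * s + (j'.val : ℝ) = (i.val : ℝ) * s + (j.val : ℝ) := by
      have : ((i.val : ℝ) - (i'.val : ℝ)) * s = (j'.val : ℝ) - (j.val : ℝ) := by
        rw [hs, mul_div_cancel₀ _ hd]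
      nlinarith [this]
    simp only []
    exact Prod.ext rfl this
  refine ⟨B, ?_, ?_, ?_⟩
  · -- each set is the image of a simple curve
    intro i j
    refine ⟨⟨-(n:ℝ), (n:ℝ), by linarith,
      fun x : ℝ => (x, (i.val : ℝ) * x + (j.val : ℝ)),
      (Continuous.continuousOn (by continuity)),
      fun x _ y _ h => congrArg Prod.fst h⟩, rfl⟩
  · -- disjointness within a family
    intro i j j' hjj'
    rw [Set.disjoint_left]
    rintro _ ⟨x, hx, rfl⟩ ⟨y, hy, hxy⟩
    have h1 : y = x := congrArg Prod.fst hxy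
    have h2 : (i.val : ℝ) * y + (j'.val : ℝ) = (i.val : ℝ) * x + (j.val : ℝ) :=
      congrArg Prod.snd hxy
    rw [h1] at h2
    have : (j'.val : ℝ) = (j.val : ℝ) := by linarith
    exact hjj' (Fin.ext (by exact_mod_cast this)).symm
  · -- no SDR
    rintro ⟨p, g, hpinj, hdisj⟩
    have hsnd : ∀ j : Fin n, (p j).2 = (p ⟨0, by omega⟩).2 := by
      intro j
      by_cases h : j = ⟨0, by omega⟩
      · rw [h]
      · by_contra hne
        exact hcross _ _ _ _ hne (hdisj j ⟨0, by omega⟩ h)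
    have hfst : Function.Injective (fun j => (p j).1) := by
      intro j j' h
      apply hpinj
      exact Prod.ext h (by rw [hsnd j, hsnd j'])
    have := Fintype.card_le_of_injective _ hfst
    simp [Fintype.card_fin] at this
    omega
end

section
/- Let m < n and let A_1,...,A_N (N arbitrary) be families, each consisting of m pairwise disjoint horizontal segments in the plane, and suppose R is an SDR of maximum size for these families, chosen (among maximum SDRs) to meet a maximum number of horizontal lines. If a line l contains two distinct segments of R and some segment I ∈ R on l has a sibling I' in the same family lying on a line met by no segment of R, then |R| is not maximum with respect to the line-count criterion — equivalently: in such an extremal SDR, every line that contains a segment of R and for which some represented family has a member on an untouched line contains exactly one segment of R. -/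
/-- The horizontal segment `s` lies on the horizontal line `y`. -/
def OnLine (s : Set (ℝ × ℝ)) (y : ℝ) : Prop :=
  s.Nonempty ∧ s ⊆ {z : ℝ × ℝ | z.2 = y}

lemma OnLine.unique {s : Set (ℝ × ℝ)} {y y' : ℝ} (h : OnLine s y) (h' : OnLine s y') :
    y = y' := by
  obtain ⟨z, hz⟩ := h.1
  have h1 := h.2 hz
  have h2 := h'.2 hz
  simp only [Set.mem_setOf_eq] at h1 h2
  rw [← h1, h2]

lemma OnLine.disjoint {s t : Set (ℝ × ℝ)} {y y' : ℝ} (h : OnLine s y) (h' : OnLine t y')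
    (hne : y ≠ y') : Disjoint s t := by
  rw [Set.disjoint_left]
  intro z hz hz'
  exact hne ((h.2 hz).symm.trans (h'.2 hz'))

lemma lines_finite {r : ℕ} (B : Fin r → Set (ℝ × ℝ)) :
    {y : ℝ | ∃ k, OnLine (B k) y}.Finite := by
  have hsub : {y : ℝ | ∃ k, OnLine (B k) y} ⊆ ⋃ k, {y | OnLine (B k) y} := by
    intro y ⟨k, hk⟩
    exact Set.mem_iUnion.mpr ⟨k, hk⟩
  refine Set.Finite.subset (Set.finite_iUnion fun k => ?_) hsub
  apply Set.Subsingleton.finite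
  intro a ha b hb
  exact OnLine.unique ha hb

/-- Claim 2.4 (Claim 1): let `R` (given by `p`, `g`) be an SDR of maximum size for
families of `m` disjoint horizontal segments, chosen among maximum SDRs to meet a
maximum number of horizontal lines.  Then every line of `L₂` (a line meeting `R` such
that each segment of `R` on it has a sibling in its family on a line of `L₀`, i.e. on a
line met by no segment of `R`) contains exactly one segment of `R`. -/
theorem stmt_16 (m n N r : ℕ) (hm : 0 < m) (hmn : m < n)
    (A : Fin N → Fin m → Set (ℝ × ℝ))
    (hseg : ∀ i j, ∃ a b y : ℝ, a ≤ b ∧ A i j = Set.Icc a b ×ˢ {y})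
    (hdisj : ∀ i, ∀ j j', j ≠ j' → Disjoint (A i j) (A i j'))
    (p : Fin r → Fin N) (g : Fin r → Fin m)
    (hp : Function.Injective p)
    (hR : ∀ j j', j ≠ j' → Disjoint (A (p j) (g j)) (A (p j') (g j')))
    (hmax : ∀ (r' : ℕ) (p' : Fin r' → Fin N) (g' : Fin r' → Fin m),
        Function.Injective p' →
        (∀ j j', j ≠ j' → Disjoint (A (p' j) (g' j)) (A (p' j') (g' j'))) → r' ≤ r)
    (hlines : ∀ (p' : Fin r → Fin N) (g' : Fin r → Fin m),
        Function.Injective p' →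
        (∀ j j', j ≠ j' → Disjoint (A (p' j) (g' j)) (A (p' j') (g' j'))) →
        {y : ℝ | ∃ j, OnLine (A (p' j) (g' j)) y}.ncard ≤
          {y : ℝ | ∃ j, OnLine (A (p j) (g j)) y}.ncard) :
    ∀ y : ℝ,
      (∀ j : Fin r, OnLine (A (p j) (g j)) y →
        ∃ (j2 : Fin m) (y0 : ℝ),
          (∃ i0 j0, OnLine (A i0 j0) y0) ∧
          (∀ j', ¬ OnLine (A (p j') (g j')) y0) ∧
          OnLine (A (p j) j2) y0) →
      ∀ j j' : Fin r, OnLine (A (p j) (g j)) y → OnLine (A (p j') (g j')) y → j = j' := by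
  intro y hy j j' hj hj'
  by_contra hne
  obtain ⟨j2, y0, _, hy0none, hsib⟩ := hy j hj
  -- each segment of R lies on a unique line
  have hline : ∀ k : Fin r, ∃ yk, OnLine (A (p k) (g k)) yk := by
    intro k
    obtain ⟨a, b, yk, hab, hEq⟩ := hseg (p k) (g k)
    refine ⟨yk, ?_, ?_⟩
    · rw [hEq]; exact ⟨(a, yk), by simp [hab]⟩
    · rw [hEq]; rintro ⟨x, z⟩ ⟨-, hz⟩; exact hz
  set g' : Fin r → Fin m := Function.update g j j2 with hg'
  have hg'j : g' j = j2 := Function.update_self j j2 g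
  have hg'k : ∀ k, k ≠ j → g' k = g k := fun k hk => Function.update_of_ne hk j2 g
  -- new SDR is pairwise disjoint
  have hR' : ∀ k k', k ≠ k' → Disjoint (A (p k) (g' k)) (A (p k') (g' k')) := by
    intro k k' hkk'
    by_cases hk : k = j
    · subst hk
      rw [hg'j, hg'k k' (Ne.symm hkk')]
      obtain ⟨yk', hyk'⟩ := hline k'
      exact OnLine.disjoint hsib hyk' (fun h => hy0none k' (h ▸ hyk'))
    · by_cases hk' : k' = j
      · subst hk'
        rw [hg'j, hg'k k hk]
        obtain ⟨yk, hyk⟩ := hline k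
        exact OnLine.disjoint hyk hsib (fun h => hy0none k (h.symm ▸ hyk))
      · rw [hg'k k hk, hg'k k' hk']
        exact hR k k' hkk'
  have hle := hlines p g' hp hR'
  -- the old line set
  set S := {y1 : ℝ | ∃ k, OnLine (A (p k) (g k)) y1} with hS
  set S' := {y1 : ℝ | ∃ k, OnLine (A (p k) (g' k)) y1} with hS'
  have hSsub : S ⊆ S' := by
    rintro y1 ⟨k, hk⟩
    by_cases hkj : k = j
    · subst hkj
      have hy1 : y1 = y := OnLine.unique hk hj
      subst hy1
      exact ⟨j', by rw [hg'k j' (Ne.symm hne)]; exact hj'⟩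
    · exact ⟨k, by rw [hg'k k hkj]; exact hk⟩
  have hy0S' : y0 ∈ S' := ⟨j, by rw [hg'j]; exact hsib⟩
  have hy0S : y0 ∉ S := by rintro ⟨k, hk⟩; exact hy0none k hk
  have hS'fin : S'.Finite := lines_finite _
  have hins : insert y0 S ⊆ S' := Set.insert_subset hy0S' hSsub
  have h1 : (insert y0 S).ncard ≤ S'.ncard := Set.ncard_le_ncard hins hS'fin
  have h2 : (insert y0 S).ncard = S.ncard + 1 :=
    Set.ncard_insert_of_notMem hy0S (hS'fin.subset hSsub)
  omega
end

section
/- Let n be a positive integer and let X_1,...,X_n each be a set of n pairwise disjoint closed horizontal segments in ℝ², where all segments in ∪X_i lie on a single horizontal line. Then there is a complete system of disjoint representatives: segments I_1 ∈ X_{σ(1)},...,I_n ∈ X_{σ(n)} for some permutation σ of [n], pairwise disjoint. -/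
open scoped Classical

/-- Greedy induction lemma: from `k` families (indexed by `S`) each offering at least `k`
pairwise-disjoint closed intervals, one can select one interval per family, pairwise disjoint. -/
lemma sdr_intervals (n : ℕ) (hn : 0 < n) (a b : Fin n → Fin n → ℝ)
    (hab : ∀ i j, a i j ≤ b i j)
    (hd : ∀ i j j', j ≠ j' →
      Disjoint (Set.Icc (a i j) (b i j)) (Set.Icc (a i j') (b i j'))) :
    ∀ (k : ℕ) (S : Finset (Fin n)) (T : Fin n → Finset (Fin n)), S.card = k →
      (∀ i ∈ S, k ≤ (T i).card) →
      ∃ g : Fin n → Fin n, (∀ i ∈ S, g i ∈ T i) ∧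
        ∀ i ∈ S, ∀ i' ∈ S, i ≠ i' →
          Disjoint (Set.Icc (a i (g i)) (b i (g i))) (Set.Icc (a i' (g i')) (b i' (g i'))) := by
  intro k
  induction k with
  | zero =>
    intro S T hS _
    rw [Finset.card_eq_zero] at hS
    subst hS
    exact ⟨fun _ => ⟨0, hn⟩, by simp, by simp⟩
  | succ k ih =>
    intro S T hS hT
    have hSne : S.Nonempty := Finset.card_pos.mp (by omega)
    have hP : (S.sigma T).Nonempty := by
      obtain ⟨i, hi⟩ := hSne
      have : (T i).Nonempty := Finset.card_pos.mp (by have := hT i hi; omega)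
      obtain ⟨j, hj⟩ := this
      exact ⟨⟨i, j⟩, Finset.mem_sigma.mpr ⟨hi, hj⟩⟩
    obtain ⟨⟨i₀, j₀⟩, hmem, hmin⟩ := Finset.exists_min_image (S.sigma T)
      (fun p => b p.1 p.2) hP
    rw [Finset.mem_sigma] at hmem
    obtain ⟨hi₀S, hj₀T⟩ := hmem
    -- minimal right endpoint
    have hminle : ∀ i ∈ S, ∀ j ∈ T i, b i₀ j₀ ≤ b i j := by
      intro i hi j hj
      exact hmin ⟨i, j⟩ (Finset.mem_sigma.mpr ⟨hi, hj⟩)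
    set S' := S.erase i₀ with hS'
    set T' : Fin n → Finset (Fin n) := fun i => (T i).filter
      (fun j => Disjoint (Set.Icc (a i j) (b i j)) (Set.Icc (a i₀ j₀) (b i₀ j₀))) with hT'
    -- intervals not disjoint from the chosen one contain b i₀ j₀
    have hbad : ∀ i ∈ S, ∀ j ∈ T i,
        ¬ Disjoint (Set.Icc (a i j) (b i j)) (Set.Icc (a i₀ j₀) (b i₀ j₀)) →
        b i₀ j₀ ∈ Set.Icc (a i j) (b i j) := by
      intro i hi j hj hnd
      rw [Set.not_disjoint_iff] at hnd
      obtain ⟨x, ⟨hx1, hx2⟩, ⟨hx3, hx4⟩⟩ := hnd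
      exact ⟨le_trans hx1 hx4, hminle i hi j hj⟩
    have hcard' : ∀ i ∈ S', k ≤ (T' i).card := by
      intro i hi
      have hiS : i ∈ S := Finset.mem_of_mem_erase hi
      have hsplit := Finset.filter_union_filter_not_eq
        (fun j => Disjoint (Set.Icc (a i j) (b i j)) (Set.Icc (a i₀ j₀) (b i₀ j₀))) (T i)
      have hbadcard : ((T i).filter (fun j =>
          ¬ Disjoint (Set.Icc (a i j) (b i j)) (Set.Icc (a i₀ j₀) (b i₀ j₀)))).card ≤ 1 := by
        apply Finset.card_le_one.mpr
        intro j hj j' hj'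
        rw [Finset.mem_filter] at hj hj'
        by_contra hne
        have h1 := hbad i hiS j hj.1 hj.2
        have h2 := hbad i hiS j' hj'.1 hj'.2
        exact Set.disjoint_left.mp (hd i j j' hne) h1 h2
      have : (T i).card ≤ (T' i).card + 1 := by
        calc (T i).card = ((T i).filter _ ∪ (T i).filter _).card := by rw [hsplit]
          _ ≤ (T' i).card + _ := Finset.card_union_le _ _
          _ ≤ (T' i).card + 1 := by omega
      have := hT i hiS
      omega
    have hScard' : S'.card = k := by
      rw [hS', Finset.card_erase_of_mem hi₀S, hS]; omega
    obtain ⟨g', hg'mem, hg'dis⟩ := ih S' T' hScard' hcard'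
    refine ⟨fun i => if i = i₀ then j₀ else g' i, ?_, ?_⟩
    · intro i hi
      by_cases h : i = i₀
      · subst h; simp [hj₀T]
      · simp only [if_neg h]
        have := hg'mem i (Finset.mem_erase.mpr ⟨h, hi⟩)
        exact (Finset.mem_filter.mp this).1
    · intro i hi i' hi' hne
      by_cases h : i = i₀ <;> by_cases h' : i' = i₀
      · exact absurd (h.trans h'.symm) hne
      · subst h
        simp only [if_pos rfl, if_neg h']
        have := hg'mem i' (Finset.mem_erase.mpr ⟨h', hi'⟩)
        exact ((Finset.mem_filter.mp this).2).symm
      · subst h'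
        simp only [if_pos rfl, if_neg h]
        have := hg'mem i (Finset.mem_erase.mpr ⟨h, hi⟩)
        exact (Finset.mem_filter.mp this).2
      · simp only [if_neg h, if_neg h']
        exact hg'dis i (Finset.mem_erase.mpr ⟨h, hi⟩) i' (Finset.mem_erase.mpr ⟨h', hi'⟩) hne

/-- `n` families, each of `n` pairwise disjoint closed horizontal segments all lying on a
single common horizontal line, have a complete SDR. -/
theorem stmt_17 (n : ℕ) (hn : 0 < n) (X : Fin n → Fin n → Set (ℝ × ℝ)) (y : ℝ)
    (hseg : ∀ i j, ∃ a b : ℝ, a ≤ b ∧ X i j = Set.Icc a b ×ˢ {y})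
    (hdisj : ∀ i, ∀ j j', j ≠ j' → Disjoint (X i j) (X i j')) :
    ∃ (σ : Equiv.Perm (Fin n)) (g : Fin n → Fin n),
      ∀ j j' : Fin n, j ≠ j' → Disjoint (X (σ j) (g j)) (X (σ j') (g j')) := by
  choose a b hab hX using hseg
  have hd : ∀ i j j', j ≠ j' →
      Disjoint (Set.Icc (a i j) (b i j)) (Set.Icc (a i j') (b i j')) := by
    intro i j j' hne
    rw [Set.disjoint_left]
    intro x hx hx'
    have h1 : (x, y) ∈ X i j := by rw [hX i j]; exact ⟨hx, rfl⟩
    have h2 : (x, y) ∈ X i j' := by rw [hX i j']; exact ⟨hx', rfl⟩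
    exact Set.disjoint_left.mp (hdisj i j j' hne) h1 h2
  obtain ⟨g, _, hgdis⟩ := sdr_intervals n hn a b hab hd n Finset.univ (fun _ => Finset.univ)
    (by simp) (by simp)
  refine ⟨Equiv.refl _, g, ?_⟩
  intro j j' hne
  simp only [Equiv.refl_apply]
  rw [hX j (g j), hX j' (g j'), Set.disjoint_left]
  rintro ⟨x, z⟩ ⟨hx, hz⟩ ⟨hx', hz'⟩
  exact Set.disjoint_left.mp (hgdis j (Finset.mem_univ _) j' (Finset.mem_univ _) hne) hx hx'
end
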